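/- arXiv:2301.00995 — 7 statements merged into one kernel-verified Lean document; each statement's English description precedes it below -/
import Mathlib

section
/- Let N ≥ 2, ℓ ≥ 1, d ≥ 1, and let f : {0,1}^ℓ → {0,1}^{N+1} be a d-local function. Let b ∈ [0, 1/2] satisfy b² ≥ (1/4)·(1 − (1/(2d))^{ln 4}), and let B be the product distribution on {0,1}^ℓ whose coordinates are i.i.d. and equal 0 with probability 1/2 + b and 1 with probability 1/2 − b. Then for every function g : {0,1}^N → {0,1}, the total variation distance between the distribution of f(B) and the distribution of (X, g(X)), where X is uniform on {0,1}^N, is at least 1/2 − 1/N. -/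
set_option maxHeartbeats 1000000


open Finset

/-- `f` is `d`-local: every output bit depends on at most `d` input bits. -/
def IsLocal {ℓ m : ℕ} (d : ℕ) (f : (Fin ℓ → Bool) → (Fin m → Bool)) : Prop :=
  ∀ j : Fin m, ∃ S : Finset (Fin ℓ), S.card ≤ d ∧
    ∀ u u' : Fin ℓ → Bool, (∀ i ∈ S, u i = u' i) → f u j = f u' j

/-- Distribution of `f(U)` for `U` uniform on `{0,1}^ℓ`. -/
noncomputable def pushU {ℓ : ℕ} {S : Type*} [Fintype S] [DecidableEq S]
    (f : (Fin ℓ → Bool) → S) (a : S) : ℝ :=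
  ((univ.filter (fun u => f u = a)).card : ℝ) / 2 ^ ℓ

/-- Distribution of `f(B)` where the bits of `B` are i.i.d., equal to `0`
(= `false`) with probability `1/2 + b` and to `1` (= `true`) with
probability `1/2 - b`. -/
noncomputable def pushB (b : ℝ) {ℓ : ℕ} {S : Type*} [Fintype S] [DecidableEq S]
    (f : (Fin ℓ → Bool) → S) (a : S) : ℝ :=
  ∑ u ∈ univ.filter (fun u => f u = a), ∏ i, (if u i then 1 / 2 - b else 1 / 2 + b)

/-- Total variation distance between two distributions on a finite set. -/
noncomputable def tvd {S : Type*} [Fintype S] (μ ν : S → ℝ) : ℝ :=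
  (1 / 2) * ∑ a, |μ a - ν a|

lemma weight_sum {ι : Type*} [Fintype ι] [DecidableEq ι]
    (T : Finset ι) (c : ι → Bool) (w : ι → Bool → ℝ)
    [DecidablePred fun x : ι → Bool => ∀ i ∈ T, x i = c i] :
    ∑ x ∈ univ.filter (fun x : ι → Bool => ∀ i ∈ T, x i = c i), ∏ i, w i (x i)
      = (∏ i ∈ T, w i (c i)) * ∏ i ∈ Tᶜ, (w i false + w i true) := by
  have hfilter : univ.filter (fun x : ι → Bool => ∀ i ∈ T, x i = c i)
      = Fintype.piFinset (fun i => if i ∈ T then ({c i} : Finset Bool) else Finset.univ) := by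
    ext x
    simp only [Fintype.mem_piFinset, mem_filter, mem_univ, true_and]
    constructor
    · intro h i
      by_cases hi : i ∈ T <;> simp [hi, h]
    · intro h i hi
      have := h i
      simpa [hi] using this
  rw [hfilter, ← Finset.prod_univ_sum]
  rw [← Finset.prod_mul_prod_compl T
    (fun i => ∑ j ∈ (if i ∈ T then ({c i} : Finset Bool) else Finset.univ), w i j)]
  congr 1
  · exact Finset.prod_congr rfl (fun i hi => by simp [hi])
  · refine Finset.prod_congr rfl (fun i hi => ?_)
    rw [mem_compl] at hi
    simp [hi, Fintype.sum_bool, add_comm]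

/-- Regroup a sum over fibers above a filtered set. -/
lemma fiber_regroup {α β : Type*} [Fintype α] [Fintype β] [DecidableEq β]
    (F : α → β) (P : β → Prop) [DecidablePred P] (W : α → ℝ) :
    ∑ a ∈ univ.filter P, ∑ x ∈ univ.filter (fun x => F x = a), W x
      = ∑ x ∈ univ.filter (fun x => P (F x)), W x := by
  rw [← Finset.sum_fiberwise_of_maps_to
    (g := F) (t := univ.filter P) (s := univ.filter (fun x => P (F x)))
    (fun x hx => by simpa using (mem_filter.mp hx).2) W]
  refine Finset.sum_congr rfl (fun a ha => ?_)
  have hPa : P a := by simpa using (mem_filter.mp ha).2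
  refine Finset.sum_congr ?_ (fun _ _ => rfl)
  ext x
  simp only [mem_filter, mem_univ, true_and]
  constructor
  · intro hx; exact ⟨hx ▸ hPa, hx⟩
  · intro hx; exact hx.2

/-- TVD is at least the discrepancy on any event. -/
lemma tvd_event {S : Type*} [Fintype S] (μ ν : S → ℝ)
    (hμ : ∑ a, μ a = 1) (hν : ∑ a, ν a = 1) (A : Finset S) [DecidableEq S] :
    ∑ a ∈ A, (μ a - ν a) ≤ (1 / 2) * ∑ a, |μ a - ν a| := by
  set D : S → ℝ := fun a => μ a - ν a with hD
  have htot : ∑ a ∈ A, D a + ∑ a ∈ Aᶜ, D a = 0 := by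
    rw [Finset.sum_add_sum_compl A D]
    simp only [hD, Finset.sum_sub_distrib, hμ, hν, sub_self]
  have h1 : ∑ a ∈ A, D a ≤ ∑ a ∈ A, |D a| :=
    Finset.sum_le_sum (fun a _ => le_abs_self _)
  have h2 : ∑ a ∈ A, D a ≤ ∑ a ∈ Aᶜ, |D a| := by
    have : ∑ a ∈ A, D a = -∑ a ∈ Aᶜ, D a := by linarith
    rw [this]
    calc -∑ a ∈ Aᶜ, D a ≤ |∑ a ∈ Aᶜ, D a| := neg_le_abs _
      _ ≤ ∑ a ∈ Aᶜ, |D a| := Finset.abs_sum_le_sum_abs _ _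
  have h3 : ∑ a ∈ A, |D a| + ∑ a ∈ Aᶜ, |D a| = ∑ a, |D a| :=
    Finset.sum_add_sum_compl A _
  linarith

/-- Numeric core: under the bias hypothesis, `(1/2+b)^(2d) ≥ 3/4`. -/
lemma bias_pow (d : ℕ) (hd : 1 ≤ d) (b : ℝ) (hb0 : 0 ≤ b) (hb1 : b ≤ 1 / 2)
    (hbias : (1 / 4) * (1 - (1 / (2 * (d : ℝ))) ^ (Real.log 4)) ≤ b ^ 2) :
    (3 / 4 : ℝ) ≤ (1 / 2 + b) ^ (2 * d) := by
  have hd1 : (1 : ℝ) ≤ (d : ℝ) := by exact_mod_cast hd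
  have hlog4 : Real.log 4 = 2 * Real.log 2 := by
    rw [show (4 : ℝ) = 2 ^ 2 by norm_num, Real.log_pow]; push_cast; ring
  have hl2 : (0.6931471803 : ℝ) < Real.log 2 := Real.log_two_gt_d9
  -- (2 : ℝ) ^ (log 4) ≥ 5/2
  have h2pow : (5 / 2 : ℝ) ≤ (2 : ℝ) ^ (Real.log 4) := by
    rw [Real.rpow_def_of_pos (by norm_num : (0:ℝ) < 2)]
    have h96 : (0.96 : ℝ) ≤ Real.log 2 * Real.log 4 := by
      rw [hlog4]; nlinarith [hl2]
    have hexp : (5 / 2 : ℝ) ≤ Real.exp 0.96 := by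
      have h16 : Real.exp (0.96 : ℝ) = Real.exp 0.06 ^ (16 : ℕ) := by
        rw [← Real.exp_nat_mul]; norm_num
      have h106 : (1.06 : ℝ) ≤ Real.exp 0.06 := by
        have := Real.add_one_le_exp (0.06 : ℝ); linarith
      have : (1.06 : ℝ) ^ (16 : ℕ) ≤ Real.exp 0.06 ^ (16 : ℕ) :=
        pow_le_pow_left₀ (by norm_num) h106 16
      have hnum : (5 / 2 : ℝ) ≤ (1.06 : ℝ) ^ (16 : ℕ) := by norm_num
      rw [h16]; linarith
    calc (5 / 2 : ℝ) ≤ Real.exp 0.96 := hexp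
      _ ≤ Real.exp (Real.log 2 * Real.log 4) := Real.exp_le_exp.mpr h96
  -- d * E ≤ 2/5
  set E : ℝ := (1 / (2 * (d : ℝ))) ^ (Real.log 4) with hE
  have hdpos : (0 : ℝ) < (d : ℝ) := by linarith
  have hE0 : 0 < E := Real.rpow_pos_of_pos (by positivity) _
  have hdE : (d : ℝ) * E ≤ 2 / 5 := by
    have hsplit : ((2 * (d : ℝ))) ^ (Real.log 4)
        = (2 : ℝ) ^ (Real.log 4) * (d : ℝ) ^ (Real.log 4) :=
      Real.mul_rpow (by norm_num) (le_of_lt hdpos)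
    have hdrp : (d : ℝ) ≤ (d : ℝ) ^ (Real.log 4) := by
      nth_rewrite 1 [← Real.rpow_one (d : ℝ)]
      refine Real.rpow_le_rpow_of_exponent_le hd1 ?_
      rw [hlog4]; nlinarith [hl2]
    have hEeq : E = ((2 * (d : ℝ)) ^ (Real.log 4))⁻¹ := by
      rw [hE, one_div, Real.inv_rpow (by positivity)]
    have hpos2 : (0 : ℝ) < (2 : ℝ) ^ (Real.log 4) := Real.rpow_pos_of_pos (by norm_num) _
    have hposd : (0 : ℝ) < (d : ℝ) ^ (Real.log 4) := Real.rpow_pos_of_pos hdpos _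
    have hle : (2 : ℝ) ^ (Real.log 4) * (d : ℝ) ≤ (2 * (d : ℝ)) ^ (Real.log 4) := by
      rw [hsplit]
      exact mul_le_mul_of_nonneg_left hdrp (le_of_lt hpos2)
    have hinv : ((2 * (d : ℝ)) ^ (Real.log 4))⁻¹ ≤ ((2 : ℝ) ^ (Real.log 4) * (d : ℝ))⁻¹ :=
      inv_anti₀ (by positivity) hle
    calc (d : ℝ) * E ≤ (d : ℝ) * ((2 : ℝ) ^ (Real.log 4) * (d : ℝ))⁻¹ := by
          rw [hEeq]
          exact mul_le_mul_of_nonneg_left hinv (le_of_lt hdpos)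
      _ = ((2 : ℝ) ^ (Real.log 4))⁻¹ := by field_simp
      _ ≤ (5 / 2 : ℝ)⁻¹ := by
          exact inv_anti₀ (by norm_num) h2pow
      _ = 2 / 5 := by norm_num
  have hEd : E ≤ 2 / 5 := by nlinarith [hE0]
  -- now the t-chain
  set t : ℝ := 1 / 2 - b with ht
  have ht0 : 0 ≤ t := by simp [ht]; linarith
  have ht12 : t ≤ 1 / 2 := by simp [ht]; linarith
  have hprod : t * (1 - t) ≤ E / 4 := by
    have : t * (1 - t) = 1 / 4 - b ^ 2 := by rw [ht]; ring
    rw [this]; nlinarith [hbias]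
  have hc1 : t ≤ E / 2 := by
    have h1 : t * (1 / 2) ≤ t * (1 - t) := mul_le_mul_of_nonneg_left (by linarith) ht0
    linarith
  have hc2 : t ≤ 1 / 5 := by linarith
  have hc3 : t ≤ 5 * E / 16 := by
    have h1 : t * (4 / 5) ≤ t * (1 - t) := mul_le_mul_of_nonneg_left (by linarith) ht0
    linarith
  have hc4 : t ≤ 1 / 8 := by linarith
  have hc5 : t ≤ 2 * E / 7 := by
    have h1 : t * (7 / 8) ≤ t * (1 - t) := mul_le_mul_of_nonneg_left (by linarith) ht0
    linarith
  -- Bernoulli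
  have hm2 : (-2 : ℝ) ≤ -t := by rw [ht]; linarith
  have hbern : 1 + ((2 * d : ℕ) : ℝ) * (-t) ≤ (1 + (-t)) ^ (2 * d) :=
    one_add_mul_le_pow hm2 (2 * d)
  have h1t : (1 : ℝ) + (-t) = 1 / 2 + b := by rw [ht]; ring
  rw [h1t] at hbern
  have hcast : ((2 * d : ℕ) : ℝ) = 2 * (d : ℝ) := by push_cast; ring
  rw [hcast] at hbern
  -- 1 - 2 d t ≥ 1 - (4/7) d E ≥ 1 - (4/7)(2/5) = 27/35 ≥ 3/4
  have hdt : 2 * (d : ℝ) * t ≤ (4 / 7) * ((d : ℝ) * E) := by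
    have h1 : (d : ℝ) * t ≤ (d : ℝ) * (2 * E / 7) := mul_le_mul_of_nonneg_left hc5 (le_of_lt hdpos)
    linarith
  nlinarith [hbern, hdt, hdE]

-- helper: sum over all boolean vectors of a product of per-coordinate weights
lemma sum_weights_total {ι : Type*} [Fintype ι] [DecidableEq ι] (w : ι → Bool → ℝ)
    (h : ∀ i, w i false + w i true = 1) :
    ∑ x : ι → Bool, ∏ i, w i (x i) = 1 := by
  have h0 := weight_sum (∅ : Finset ι) (fun _ => false) w
  simpa [h] using h0

lemma pushU_eq {n : ℕ} {S : Type*} [Fintype S] [DecidableEq S]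
    (f : (Fin n → Bool) → S) (a : S) :
    pushU f a = ∑ u ∈ univ.filter (fun u => f u = a), ∏ _i : Fin n, (1 / 2 : ℝ) := by
  rw [pushU, Finset.sum_const, Finset.prod_const, nsmul_eq_mul]
  rw [div_eq_mul_inv, one_div, inv_pow]
  simp

theorem stmt4 (N ℓ d : ℕ) (hN : 2 ≤ N) (hℓ : 1 ≤ ℓ) (hd : 1 ≤ d)
    (f : (Fin ℓ → Bool) → (Fin (N + 1) → Bool)) (hf : IsLocal d f)
    (b : ℝ) (hb0 : 0 ≤ b) (hb1 : b ≤ 1 / 2)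
    (hbias : (1 / 4) * (1 - (1 / (2 * (d : ℝ))) ^ (Real.log 4)) ≤ b ^ 2)
    (g : (Fin N → Bool) → Bool) :
    1 / 2 - 1 / (N : ℝ) ≤
      tvd (pushB b f) (pushU fun x : Fin N → Bool => Fin.snoc x (g x)) := by
  classical
  set F : (Fin N → Bool) → (Fin (N + 1) → Bool) := fun x => Fin.snoc x (g x) with hF
  set c : Fin (N + 1) → Bool := f (fun _ => false) with hc
  have hN0 : 0 < N := by omega
  have hN1 : 1 < N := by omega
  set k₁ : Fin N := ⟨0, hN0⟩
  set k₂ : Fin N := ⟨1, hN1⟩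
  have hk : k₁ ≠ k₂ := by simp [k₁, k₂, Fin.ext_iff]
  set j₁ : Fin (N + 1) := k₁.castSucc with hj₁
  set j₂ : Fin (N + 1) := k₂.castSucc with hj₂
  set P : (Fin (N + 1) → Bool) → Prop := fun a => a j₁ = c j₁ ∧ a j₂ = c j₂ with hP
  set A : Finset (Fin (N + 1) → Bool) := univ.filter P with hA
  obtain ⟨S₁, hS₁card, hS₁⟩ := hf j₁
  obtain ⟨S₂, hS₂card, hS₂⟩ := hf j₂
  set V : Finset (Fin ℓ) := S₁ ∪ S₂ with hV
  set w : Fin ℓ → Bool → ℝ := fun _ y => if y then 1 / 2 - b else 1 / 2 + b with hw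
  set cz : Fin ℓ → Bool := fun _ => false with hcz
  set cN : Fin N → Bool := fun k => c k.castSucc with hcN
  have hwsum : ∀ i, w i false + w i true = 1 := by intro i; simp [hw]; ring
  have hwnn : ∀ i (y : Bool), 0 ≤ w i y := by
    intro i y; cases y <;> simp [hw] <;> linarith
  -- μ sums to 1
  have hμ1 : ∑ a, pushB b f a = 1 := by
    have := fiber_regroup f (fun _ => True) (fun u => ∏ i, w i (u i))
    simp only [Finset.filter_true_of_mem (fun _ _ => trivial)] at this
    calc ∑ a, pushB b f a
        = ∑ a : Fin (N+1) → Bool, ∑ u ∈ univ.filter (fun u => f u = a), ∏ i, w i (u i) := rfl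
      _ = ∑ u : Fin ℓ → Bool, ∏ i, w i (u i) := this
      _ = 1 := sum_weights_total w hwsum
  -- ν sums to 1
  have hν1 : ∑ a, pushU F a = 1 := by
    have hr := fiber_regroup F (fun _ => True) (fun u => ∏ _i : Fin N, (1/2 : ℝ))
    simp only [Finset.filter_true_of_mem (fun _ _ => trivial)] at hr
    calc ∑ a, pushU F a
        = ∑ a : Fin (N+1) → Bool, ∑ u ∈ univ.filter (fun u => F u = a), ∏ _i : Fin N, (1/2:ℝ) := by
          refine Finset.sum_congr rfl (fun a _ => pushU_eq F a)
      _ = ∑ u : Fin N → Bool, ∏ _i : Fin N, (1/2 : ℝ) := hr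
      _ = 1 := sum_weights_total (fun _ _ => (1/2 : ℝ)) (fun _ => by norm_num)
  -- lower bound on μ(A)
  have hμA : (1 / 2 + b) ^ (2 * d) ≤ ∑ a ∈ A, pushB b f a := by
    have hr := fiber_regroup f P (fun u => ∏ i, w i (u i))
    have e1 : ∑ a ∈ A, pushB b f a = ∑ u ∈ univ.filter (fun u => P (f u)), ∏ i, w i (u i) := hr
    have hsubset : univ.filter (fun u : Fin ℓ → Bool => ∀ i ∈ V, u i = cz i)
        ⊆ univ.filter (fun u => P (f u)) := by
      intro u hu
      simp only [mem_filter, mem_univ, true_and] at hu ⊢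
      constructor
      · exact hS₁ u (fun _ => false) (fun i hi => hu i (Finset.mem_union_left _ hi))
      · exact hS₂ u (fun _ => false) (fun i hi => hu i (Finset.mem_union_right _ hi))
    have hmono : ∑ u ∈ univ.filter (fun u : Fin ℓ → Bool => ∀ i ∈ V, u i = cz i),
          ∏ i, w i (u i) ≤ ∑ u ∈ univ.filter (fun u => P (f u)), ∏ i, w i (u i) :=
      Finset.sum_le_sum_of_subset_of_nonneg hsubset
        (fun u _ _ => Finset.prod_nonneg (fun i _ => hwnn i (u i)))
    have hval : ∑ u ∈ univ.filter (fun u : Fin ℓ → Bool => ∀ i ∈ V, u i = cz i),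
          ∏ i, w i (u i) = (1 / 2 + b) ^ V.card := by
      calc ∑ u ∈ univ.filter (fun u : Fin ℓ → Bool => ∀ i ∈ V, u i = cz i), ∏ i, w i (u i)
          = (∏ i ∈ V, w i (cz i)) * ∏ i ∈ Vᶜ, (w i false + w i true) := weight_sum V cz w
        _ = (1 / 2 + b) ^ V.card * 1 := by
            congr 1
            · rw [Finset.prod_congr rfl
                (fun i _ => show w i (cz i) = 1 / 2 + b from by simp [hw, hcz])]
              exact Finset.prod_const _
            · rw [Finset.prod_congr rfl (fun i _ => hwsum i)]
              exact Finset.prod_const_one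
        _ = (1 / 2 + b) ^ V.card := mul_one _
    have hcard : V.card ≤ 2 * d := by
      calc V.card ≤ S₁.card + S₂.card := Finset.card_union_le _ _
        _ ≤ 2 * d := by omega
    have hpow : (1 / 2 + b) ^ (2 * d) ≤ (1 / 2 + b) ^ V.card :=
      pow_le_pow_of_le_one (by linarith) (by linarith) hcard
    rw [e1]; rw [hval] at hmono; linarith
  -- exact value of ν(A)
  have hνA : ∑ a ∈ A, pushU F a = 1 / 4 := by
    have hr := fiber_regroup F P (fun u => ∏ _i : Fin N, (1/2 : ℝ))
    have e1 : ∑ a ∈ A, pushU F a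
        = ∑ u ∈ univ.filter (fun u => P (F u)), ∏ _i : Fin N, (1/2 : ℝ) := by
      rw [hA, ← hr]
      exact Finset.sum_congr rfl (fun a _ => pushU_eq F a)
    have hPF : ∀ x : Fin N → Bool, P (F x) ↔ (x k₁ = cN k₁ ∧ x k₂ = cN k₂) := by
      intro x
      have h1 : F x j₁ = x k₁ := by simp only [hF, hj₁, Fin.snoc_castSucc]
      have h2 : F x j₂ = x k₂ := by simp only [hF, hj₂, Fin.snoc_castSucc]
      show (F x j₁ = c j₁ ∧ F x j₂ = c j₂) ↔ _
      rw [h1, h2]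
    have e2 : univ.filter (fun u : Fin N → Bool => P (F u))
        = univ.filter (fun u : Fin N → Bool =>
            ∀ i ∈ ({k₁, k₂} : Finset (Fin N)), u i = cN i) := by
      ext x
      simp only [mem_filter, mem_univ, true_and]
      rw [hPF x]
      constructor
      · rintro ⟨h1, h2⟩ i hi
        rcases Finset.mem_insert.mp hi with h | h
        · subst h; exact h1
        · have := Finset.mem_singleton.mp h; subst this; exact h2
      · intro h
        exact ⟨h k₁ (Finset.mem_insert_self _ _),
          h k₂ (Finset.mem_insert_of_mem (Finset.mem_singleton_self _))⟩
    have hcard2 : ({k₁, k₂} : Finset (Fin N)).card = 2 := by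
      rw [Finset.card_insert_of_notMem (by simp [hk]), Finset.card_singleton]
    have hval : ∑ u ∈ univ.filter (fun u : Fin N → Bool =>
          ∀ i ∈ ({k₁, k₂} : Finset (Fin N)), u i = cN i), ∏ _i : Fin N, (1/2 : ℝ) = 1 / 4 := by
      calc ∑ u ∈ univ.filter (fun u : Fin N → Bool =>
              ∀ i ∈ ({k₁, k₂} : Finset (Fin N)), u i = cN i), ∏ _i : Fin N, (1/2 : ℝ)
          = (∏ i ∈ ({k₁, k₂} : Finset (Fin N)), (1/2 : ℝ)) *
              ∏ i ∈ ({k₁, k₂} : Finset (Fin N))ᶜ, ((1:ℝ)/2 + 1/2) :=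
            weight_sum ({k₁, k₂} : Finset (Fin N)) cN (fun _ _ => (1/2 : ℝ))
        _ = 1 / 4 := by
            rw [Finset.prod_const, hcard2]
            rw [Finset.prod_congr rfl (fun i _ => show (1:ℝ)/2 + 1/2 = 1 from by norm_num)]
            rw [Finset.prod_const_one]
            norm_num
    rw [e1, e2, hval]
  -- assemble
  have hkey := tvd_event (pushB b f) (pushU F) hμ1 hν1 A
  have h34 := bias_pow d hd b hb0 hb1 hbias
  have hsub : ∑ a ∈ A, (pushB b f a - pushU F a)
      = (∑ a ∈ A, pushB b f a) - ∑ a ∈ A, pushU F a := Finset.sum_sub_distrib _ _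
  have hNpos : (0 : ℝ) < (N : ℝ) := by exact_mod_cast hN0
  have hinv : (0 : ℝ) ≤ 1 / (N : ℝ) := by positivity
  rw [tvd]
  calc 1 / 2 - 1 / (N : ℝ) ≤ 1 / 2 := by linarith
    _ ≤ (∑ a ∈ A, pushB b f a) - ∑ a ∈ A, pushU F a := by rw [hνA]; linarith
    _ = ∑ a ∈ A, (pushB b f a - pushU F a) := hsub.symm
    _ ≤ (1 / 2) * ∑ a, |pushB b f a - pushU F a| := hkey
end

section
/- Let n ≥ 3, ℓ ≥ 1, and let f : {0,1}^ℓ → {0,1}^{n+1} be any function. Suppose there exist a set S ⊆ {1,…,n} with |S| ≥ 3 and an integer c such that Σ_{j∈S} f(u)_j = c for every u ∈ {0,1}^ℓ. Then for every function g : {0,1}^n → {0,1}, the total variation distance between the distribution of f(U), where U is uniform on {0,1}^ℓ, and the distribution of (X, g(X)), where X is uniform on {0,1}^n, is at least 5/8. -/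
open Finset

/-!
Under `f(U)` the event `A = {a | ∑_{j ∈ S} a_j = c}` has probability one. Under `(X, g(X))` it is
the event that the restriction of a uniform `X` to `S` has weight exactly `c`, which has probability
at most `max_k C(|S|, k) / 2^|S| ≤ 3/8` once `|S| ≥ 3`. Hence the total variation distance, which
dominates `μ(A) - ν(A)` for every event `A`, is at least `1 - 3/8`.
-/

lemma eight_mul_choose_le {s : ℕ} (hs : 3 ≤ s) (k : ℕ) : 8 * s.choose k ≤ 3 * 2 ^ s := by
  induction s, hs using Nat.le_induction generalizing k with
  | base => rcases k with _ | _ | _ | _ | k <;> simp [Nat.choose]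
  | succ s hs ih =>
    cases k with
    | zero =>
      have : 2 ^ 4 ≤ 2 ^ (s + 1) := Nat.pow_le_pow_right two_pos (by omega)
      simp only [Nat.choose_zero_right]
      omega
    | succ k =>
      rw [Nat.choose_succ_succ, pow_succ]
      linarith [ih k, ih (k + 1)]

lemma card_filter_card_filter_eq_le {α : Type*} [Fintype α] [DecidableEq α]
    (S : Finset α) (k : ℕ) :
    #{x : α → Bool | #{j ∈ S | x j} = k} ≤ (#S).choose k * 2 ^ (Fintype.card α - #S) := by
  let F : (α → Bool) → Finset α × ({j // j ∉ S} → Bool) := fun x => ({j ∈ S | x j}, fun j => x j)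
  have hmaps : Set.MapsTo F {x : α → Bool | #{j ∈ S | x j} = k} (S.powersetCard k ×ˢ univ) := by
    intro x hx
    simp_all [F, mem_powersetCard, filter_subset]
  have hinj : Set.InjOn F {x : α → Bool | #{j ∈ S | x j} = k} := by
    intro x _ y _ hxy
    simp only [F, Prod.mk.injEq, funext_iff, Subtype.forall] at hxy
    funext j
    by_cases hj : j ∈ S
    · simpa [hj] using congrArg (j ∈ ·) hxy.1
    · exact hxy.2 j hj
  calc #{x : α → Bool | #{j ∈ S | x j} = k}
      ≤ #(S.powersetCard k ×ˢ (univ : Finset ({j // j ∉ S} → Bool))) :=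
        card_le_card_of_injOn F (by simpa using hmaps) (by simpa using hinj)
    _ = (#S).choose k * 2 ^ (Fintype.card α - #S) := by
        simp [Fintype.card_subtype_compl]

lemma eight_mul_card_filter_card_filter_eq_le {α : Type*} [Fintype α] [DecidableEq α]
    {S : Finset α} (hS : 3 ≤ #S) (k : ℕ) :
    8 * #{x : α → Bool | #{j ∈ S | x j} = k} ≤ 3 * 2 ^ Fintype.card α :=
  calc 8 * #{x : α → Bool | #{j ∈ S | x j} = k}
      ≤ 8 * (#S).choose k * 2 ^ (Fintype.card α - #S) := by
        rw [mul_assoc]; exact Nat.mul_le_mul_left 8 (card_filter_card_filter_eq_le S k)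
    _ ≤ 3 * 2 ^ #S * 2 ^ (Fintype.card α - #S) :=
        Nat.mul_le_mul_right _ (eight_mul_choose_le hS k)
    _ = 3 * 2 ^ Fintype.card α := by
        rw [mul_assoc, ← pow_add, Nat.add_sub_cancel' (card_le_univ S)]

lemma sum_pushU {ℓ : ℕ} {S : Type*} [Fintype S] [DecidableEq S]
    (f : (Fin ℓ → Bool) → S) (A : Finset S) :
    ∑ a ∈ A, pushU f a = #{u | f u ∈ A} / 2 ^ ℓ := by
  simp only [pushU, ← sum_div]
  congr 1
  norm_cast
  rw [card_eq_sum_card_fiberwise (s := {u | f u ∈ A}) (t := A) fun u hu => (mem_filter.mp hu).2]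
  refine sum_congr rfl fun a ha => congrArg card ?_
  ext u
  simp only [mem_filter, mem_univ, true_and]
  exact ⟨fun h => ⟨h ▸ ha, h⟩, And.right⟩

lemma sum_pushU_univ {ℓ : ℕ} {S : Type*} [Fintype S] [DecidableEq S]
    (f : (Fin ℓ → Bool) → S) : ∑ a, pushU f a = 1 := by
  rw [sum_pushU, filter_true_of_mem fun u _ => mem_univ _]
  simp

lemma sub_le_tvd {S : Type*} [Fintype S] {μ ν : S → ℝ} (h : ∑ a, μ a = ∑ a, ν a)
    (A : Finset S) : ∑ a ∈ A, μ a - ∑ a ∈ A, ν a ≤ tvd μ ν := by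
  classical
  have hμ := sum_add_sum_compl A μ
  have hν := sum_add_sum_compl A ν
  have hin : ∑ a ∈ A, (μ a - ν a) ≤ ∑ a ∈ A, |μ a - ν a| :=
    sum_le_sum fun a _ => le_abs_self _
  have hout : ∑ a ∈ Aᶜ, (ν a - μ a) ≤ ∑ a ∈ Aᶜ, |μ a - ν a| :=
    sum_le_sum fun a _ => abs_sub_comm (μ a) (ν a) ▸ le_abs_self _
  rw [sum_sub_distrib] at hin hout
  rw [tvd, ← sum_add_sum_compl A]
  linarith

theorem stmt5_general (n ℓ : ℕ)
    (f : (Fin ℓ → Bool) → (Fin (n + 1) → Bool))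
    (S : Finset (Fin n)) (hS : 3 ≤ S.card) (c : ℤ)
    (hfix : ∀ u : Fin ℓ → Bool,
      (∑ j ∈ S, (if f u j.castSucc then 1 else 0 : ℤ)) = c)
    (g : (Fin n → Bool) → Bool) :
    5 / 8 ≤ tvd (pushU f) (pushU fun x : Fin n → Bool => Fin.snoc x (g x)) := by
  set G : (Fin n → Bool) → Fin (n + 1) → Bool := fun x => Fin.snoc x (g x)
  set A : Finset (Fin (n + 1) → Bool) :=
    {a | (∑ j ∈ S, (if a j.castSucc then 1 else 0 : ℤ)) = c}
  have hfA : ∑ a ∈ A, pushU f a = 1 := by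
    rw [sum_pushU, filter_true_of_mem fun u _ => by simpa [A] using hfix u]
    simp
  have hGA : ∑ a ∈ A, pushU G a ≤ 3 / 8 := by
    have hsub : ({x | G x ∈ A} : Finset _)
        ⊆ ({x : Fin n → Bool | #{j ∈ S | x j} = c.toNat} : Finset _) := by
      intro x
      simp only [G, A, mem_filter, mem_univ, true_and, Fin.snoc_castSucc, sum_boole]
      omega
    have hcard : 8 * #{x | G x ∈ A} ≤ 3 * 2 ^ n := by
      simpa using (Nat.mul_le_mul_left 8 (card_le_card hsub)).trans
        (eight_mul_card_filter_card_filter_eq_le hS c.toNat)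
    rw [sum_pushU, div_le_iff₀ (by positivity)]
    have : (8 : ℝ) * #{x | G x ∈ A} ≤ 3 * 2 ^ n := by exact_mod_cast hcard
    linarith
  have htot : ∑ a, pushU f a = ∑ a, pushU G a := by rw [sum_pushU_univ, sum_pushU_univ]
  linarith [sub_le_tvd htot A]

theorem stmt5 (n ℓ : ℕ) (hn : 3 ≤ n) (hℓ : 1 ≤ ℓ)
    (f : (Fin ℓ → Bool) → (Fin (n + 1) → Bool))
    (S : Finset (Fin n)) (hS : 3 ≤ S.card) (c : ℤ)
    (hfix : ∀ u : Fin ℓ → Bool,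
      (∑ j ∈ S, (if f u j.castSucc then 1 else 0 : ℤ)) = c)
    (g : (Fin n → Bool) → Bool) :
    5 / 8 ≤ tvd (pushU f) (pushU fun x : Fin n → Bool => Fin.snoc x (g x)) :=
  stmt5_general n ℓ f S hS c hfix g
end

section
/- Let p be a prime, t ≥ 1, and let a₁, a₂, …, a_t be integers, each nonzero modulo p. If x = (x₁,…,x_t) is uniformly distributed on {0,1}^t, then the total variation distance between the distribution of (Σ_{i=1}^t a_i·x_i) mod p on ZMod p and the uniform distribution on ZMod p is at most √p · e^{−t/p²}. -/
open Finset

section aux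

open Real Complex

lemma cos_bound' (p : ℕ) (hp : 2 ≤ p) (k : ℕ) (hk1 : 1 ≤ k) (hk2 : k < p) :
    |Real.cos (π * k / p)| ≤ Real.exp (-1 / (p:ℝ)^2) := by
  have hp0 : (0:ℝ) < p := by positivity
  have hppi : 0 < π := pi_pos
  have hpip : 0 < π / p := by positivity
  have hk' : (1:ℝ) ≤ (k:ℝ) := by exact_mod_cast hk1
  have hkp : (k:ℝ) ≤ (p:ℝ) - 1 := by
    have : (k:ℝ) + 1 ≤ (p:ℝ) := by exact_mod_cast hk2
    linarith
  have h1 : |Real.cos (π * k / p)| ≤ Real.cos (π / p) := by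
    set x := π * k / p with hx
    have hxlb : π / p ≤ x := by
      rw [hx]; gcongr
      nlinarith
    have hxub : x ≤ π - π / p := by
      have he : π - π / p = π * ((p:ℝ) - 1) / p := by field_simp
      rw [hx, he]; gcongr
    rcases le_or_gt x (π/2) with hc | hc
    · rw [_root_.abs_of_nonneg (Real.cos_nonneg_of_mem_Icc ⟨by linarith, hc⟩)]
      exact Real.cos_le_cos_of_nonneg_of_le_pi (by positivity) (by linarith) hxlb
    · have h2 : Real.cos x = - Real.cos (π - x) := by
        rw [Real.cos_pi_sub]; ring
      rw [h2, abs_neg,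
        _root_.abs_of_nonneg (Real.cos_nonneg_of_mem_Icc ⟨by linarith, by linarith⟩)]
      refine Real.cos_le_cos_of_nonneg_of_le_pi (by positivity) (by linarith) (by linarith)
  refine h1.trans ?_
  have hp1 : (1:ℝ) ≤ (p:ℝ) := by linarith
  have hs : (1:ℝ)/p ≤ Real.sin (π / (2*p)) := by
    have h2 := Real.mul_le_sin (x := π / (2*p)) (by positivity)
      (by rw [div_le_div_iff₀ (by positivity) (by norm_num : (0:ℝ) < 2)]
          nlinarith)
    calc (1:ℝ)/p = 2/π * (π / (2*p)) := by field_simp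
      _ ≤ _ := h2
  have hcos : Real.cos (π / p) = 1 - 2 * Real.sin (π / (2*p))^2 := by
    have h2 : π / p = 2 * (π / (2*p)) := by field_simp
    rw [h2, Real.cos_two_mul, Real.cos_sq']
    ring
  have h0 : (0:ℝ) ≤ 1/(p:ℝ) := by positivity
  have hsq : (1/(p:ℝ))^2 ≤ Real.sin (π / (2*p))^2 := pow_le_pow_left₀ h0 hs 2
  have hfin : Real.cos (π / p) ≤ 1 - 2/(p:ℝ)^2 := by
    rw [hcos]
    have e1 : (1/(p:ℝ))^2 = 1/(p:ℝ)^2 := by rw [div_pow, one_pow]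
    rw [e1] at hsq
    have e5 : (2:ℝ)/(p:ℝ)^2 = 2*(1/(p:ℝ)^2) := by ring
    linarith
  refine hfin.trans ?_
  have hexp := Real.add_one_le_exp (-1/(p:ℝ)^2)
  have h3 : 0 < ((p:ℝ)^2)⁻¹ := by positivity
  have e2 : -1/(p:ℝ)^2 = -(((p:ℝ)^2)⁻¹) := by ring
  have e3 : (2:ℝ)/(p:ℝ)^2 = 2*((p:ℝ)^2)⁻¹ := by ring
  linarith [hexp]

lemma two_cos_exp' (x : ℂ) :
    1 + Complex.exp (2*x*I) = 2 * Complex.cos x * Complex.exp (x*I) := by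
  have h1 : Complex.exp (x*I) * Complex.exp (x*I) = Complex.exp (2*x*I) := by
    rw [← Complex.exp_add]; ring_nf
  have h2 : Complex.exp (-x*I) * Complex.exp (x*I) = 1 := by
    rw [← Complex.exp_add, show (-x*I + x*I) = 0 by ring, Complex.exp_zero]
  calc 1 + Complex.exp (2*x*I)
      = Complex.exp (x*I) * Complex.exp (x*I) + Complex.exp (-x*I) * Complex.exp (x*I) := by
        rw [h1, h2]; ring
    _ = 2 * Complex.cos x * Complex.exp (x*I) := by rw [Complex.cos]; ring

lemma one_add_exp_abs' (θ : ℝ) :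
    ‖1 + Complex.exp (θ * Complex.I)‖ = 2 * |Real.cos (θ/2)| := by
  have key := two_cos_exp' ((θ/2 : ℝ) : ℂ)
  rw [show (2*((θ/2:ℝ):ℂ)*I) = (θ:ℂ)*I by push_cast; ring] at key
  rw [key, norm_mul, norm_mul, Complex.norm_two, ← Complex.ofReal_cos, Complex.norm_real,
    Real.norm_eq_abs, Complex.norm_exp_ofReal_mul_I, mul_one]

lemma factor_bound' (p : ℕ) [NeZero p] (hp : 2 ≤ p) (z : ZMod p) (hz : z ≠ 0) :
    ‖1 + ZMod.stdAddChar z‖ ≤ 2 * Real.exp (-1/(p:ℝ)^2) := by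
  have h1 : ZMod.stdAddChar z = Complex.exp (((2*π*z.val/p : ℝ) : ℂ) * Complex.I) := by
    rw [ZMod.stdAddChar_apply, ZMod.toCircle_apply]
    congr 1
    push_cast
    ring
  have hcb : |Real.cos (π * z.val / p)| ≤ Real.exp (-1 / (p:ℝ)^2) := by
    refine cos_bound' p hp z.val ?_ (ZMod.val_lt z)
    have : z.val ≠ 0 := fun h => hz ((ZMod.val_eq_zero z).mp h)
    omega
  rw [h1, one_add_exp_abs', show (2*π*(z.val:ℝ)/p)/2 = π * z.val / p by ring]
  linarith

lemma addChar_map_sum' {A : Type*} [AddCommMonoid A] {ι : Type*} (ψ : AddChar A ℂ)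
    (s : Finset ι) (g : ι → A) : ψ (∑ i ∈ s, g i) = ∏ i ∈ s, ψ (g i) := by
  classical
  induction s using Finset.cons_induction with
  | empty => simp
  | cons i s hi ih => rw [Finset.sum_cons, Finset.prod_cons, ψ.map_add_eq_mul, ih]

lemma fourier_coeff' (p : ℕ) [NeZero p] (t : ℕ) (a : Fin t → ℤ) (c : ZMod p) :
    ∑ z : ZMod p, ((pushU fun x : Fin t → Bool =>
        (((∑ i, if x i then a i else 0) : ℤ) : ZMod p)) z : ℂ) * ZMod.stdAddChar (c * z)
      = (1/2^t) * ∏ i, (1 + ZMod.stdAddChar (c * (a i : ZMod p))) := by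
  classical
  set ψ := ZMod.stdAddChar (N := p)
  set f : (Fin t → Bool) → ZMod p := fun x => (((∑ i, if x i then a i else 0) : ℤ) : ZMod p)
    with hf
  have step1 : ∑ z : ZMod p, ((pushU f) z : ℂ) * ψ (c * z)
      = (1/2^t) * ∑ x : Fin t → Bool, ψ (c * f x) := by
    rw [← Finset.sum_fiberwise (univ : Finset (Fin t → Bool)) f (fun x => ψ (c * f x))]
    rw [Finset.mul_sum]
    refine Finset.sum_congr rfl fun z _ => ?_
    rw [pushU]
    push_cast
    rw [Finset.sum_congr rfl (g := fun _ => ψ (c * z))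
      (fun x hx => by rw [Finset.mem_filter] at hx; rw [hx.2]),
      Finset.sum_const, nsmul_eq_mul]
    ring
  rw [step1]
  congr 1
  have step2 : ∀ x : Fin t → Bool, ψ (c * f x)
      = ∏ i, (if x i then ψ (c * (a i : ZMod p)) else 1) := by
    intro x
    have : c * f x = ∑ i, (if x i then c * (a i : ZMod p) else 0) := by
      rw [hf]
      push_cast
      rw [Finset.mul_sum]
      refine Finset.sum_congr rfl fun i _ => ?_
      split <;> simp
    rw [this, addChar_map_sum']
    refine Finset.prod_congr rfl fun i _ => ?_
    split <;> simp
  simp_rw [step2]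
  rw [show (univ : Finset (Fin t → Bool)) = Fintype.piFinset (fun _ => (univ : Finset Bool))
      by exact Fintype.piFinset_univ.symm, ← Finset.prod_univ_sum (fun _ : Fin t => (univ : Finset Bool))
    (f := fun i b => if b then ψ (c * (a i : ZMod p)) else 1)]
  refine Finset.prod_congr rfl fun i _ => ?_
  simp [add_comm]

lemma stdAddChar_conj' (p : ℕ) [NeZero p] (x : ZMod p) :
    (starRingEnd ℂ) (ZMod.stdAddChar x) = ZMod.stdAddChar (-x) := by
  have habs : ‖ZMod.stdAddChar x‖ = 1 := by
    rw [ZMod.stdAddChar_apply]; exact Circle.norm_coe _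
  rw [AddChar.map_neg_eq_inv, Complex.inv_eq_conj habs]

lemma parseval' (p : ℕ) [NeZero p] (e : ZMod p → ℝ) :
    ∑ c : ZMod p, Complex.normSq (∑ z, (e z : ℂ) * ZMod.stdAddChar (c * z))
      = p * ∑ z, (e z)^2 := by
  have conj_term : ∀ c w : ZMod p, (starRingEnd ℂ) ((e w : ℂ) * ZMod.stdAddChar (c * w))
      = (e w : ℂ) * ZMod.stdAddChar (-(c * w)) := by
    intro c w
    rw [map_mul (starRingEnd ℂ), Complex.conj_ofReal, stdAddChar_conj']
  have key : ∑ c : ZMod p, (Complex.normSq (∑ z, (e z : ℂ) * ZMod.stdAddChar (c * z)) : ℂ)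
      = ((p : ℂ)) * ∑ z, ((e z : ℂ))^2 := by
    have expand : ∀ c : ZMod p,
        (Complex.normSq (∑ z, (e z : ℂ) * ZMod.stdAddChar (c * z)) : ℂ)
        = ∑ z, ∑ w, (e z : ℂ) * (e w : ℂ) * ZMod.stdAddChar (c * (z - w)) := by
      intro c
      rw [← Complex.mul_conj, map_sum (starRingEnd ℂ), Finset.sum_mul_sum]
      refine Finset.sum_congr rfl fun z _ => Finset.sum_congr rfl fun w _ => ?_
      rw [conj_term]
      calc (e z : ℂ) * ZMod.stdAddChar (c*z) * ((e w : ℂ) * ZMod.stdAddChar (-(c*w)))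
          = (e z : ℂ) * (e w : ℂ)
            * (ZMod.stdAddChar (c*z) * ZMod.stdAddChar (-(c*w))) := by ring
        _ = (e z : ℂ) * (e w : ℂ) * ZMod.stdAddChar (c * (z - w)) := by
            rw [← AddChar.map_add_eq_mul, show c*z + -(c*w) = c * (z-w) by ring]
    simp_rw [expand]
    rw [Finset.sum_comm]
    have inner : ∀ z : ZMod p,
        ∑ w : ZMod p, ∑ c : ZMod p, (e z : ℂ) * (e w : ℂ) * ZMod.stdAddChar (c * (z - w))
        = (e z : ℂ)^2 * p := by
      intro z
      have horth : ∀ w : ZMod p, ∑ c : ZMod p, ZMod.stdAddChar (c * (z - w))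
          = if z - w = 0 then (p : ℂ) else 0 := by
        intro w
        have h := AddChar.sum_mulShift (z - w) (ZMod.isPrimitive_stdAddChar p)
        rw [ZMod.card p] at h
        rw [h]
        split <;> simp
      calc ∑ w : ZMod p, ∑ c : ZMod p, (e z : ℂ) * (e w : ℂ) * ZMod.stdAddChar (c * (z - w))
          = ∑ w : ZMod p, (e z : ℂ) * (e w : ℂ) * (if z - w = 0 then (p:ℂ) else 0) := by
            refine Finset.sum_congr rfl fun w _ => ?_
            rw [← Finset.mul_sum, horth w]
        _ = (e z : ℂ)^2 * p := by
            simp only [sub_eq_zero, mul_ite, mul_zero]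
            rw [Finset.sum_ite_eq univ z (fun w => (e z : ℂ) * (e w : ℂ) * p)]
            simp [sq]
    rw [Finset.sum_congr rfl fun z _ => (Finset.sum_comm.trans (inner z)), ← Finset.sum_mul]
    ring
  exact_mod_cast key

end aux

theorem stmt6 (p : ℕ) (hp : p.Prime) [NeZero p] (t : ℕ) (ht : 1 ≤ t)
    (a : Fin t → ℤ) (ha : ∀ i, ((a i : ZMod p) ≠ 0)) :
    tvd (pushU fun x : Fin t → Bool => (((∑ i, if x i then a i else 0) : ℤ) : ZMod p))
        (fun _ : ZMod p => 1 / (p : ℝ))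
      ≤ Real.sqrt p * Real.exp (-(t : ℝ) / (p : ℝ) ^ 2) := by
  classical
  haveI : Fact p.Prime := ⟨hp⟩
  have hp2 : 2 ≤ p := hp.two_le
  have hp0 : (0:ℝ) < p := by exact_mod_cast hp.pos
  set f : (Fin t → Bool) → ZMod p := fun x => (((∑ i, if x i then a i else 0) : ℤ) : ZMod p)
    with hf
  set e : ZMod p → ℝ := fun z => pushU f z - 1/p with he
  set E : ZMod p → ℂ := fun c => ∑ z, (e z : ℂ) * ZMod.stdAddChar (c * z) with hE
  set B : ℝ := Real.exp (-(t:ℝ)/(p:ℝ)^2) with hB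
  have hBpos : 0 < B := Real.exp_pos _
  -- total mass of pushU f is 1
  have hsum_push : ∑ z : ZMod p, pushU f z = 1 := by
    simp only [pushU]
    rw [← Finset.sum_div]
    rw [show ∑ z : ZMod p, ((univ.filter (fun u => f u = z)).card : ℝ)
        = ((univ : Finset (Fin t → Bool)).card : ℝ) by
      push_cast
      rw [Finset.card_eq_sum_card_fiberwise (f := f) (fun x _ => Finset.mem_univ (f x))]
      push_cast
      rfl]
    rw [Finset.card_univ]
    simp [Fintype.card_fun]
  have hsume : ∑ z : ZMod p, e z = 0 := by
    simp only [he]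
    rw [Finset.sum_sub_distrib, hsum_push, Finset.sum_const, Finset.card_univ, ZMod.card,
      nsmul_eq_mul]
    field_simp
    norm_num
  have hE0 : E 0 = 0 := by
    simp only [hE, zero_mul, AddChar.map_zero_eq_one, mul_one]
    rw [← Complex.ofReal_sum, hsume, Complex.ofReal_zero]
  -- Fourier coefficients for c ≠ 0
  have hEc : ∀ c : ZMod p, c ≠ 0 →
      E c = (1/2^t) * ∏ i, (1 + ZMod.stdAddChar (c * (a i : ZMod p))) := by
    intro c hc
    have h1 := fourier_coeff' p t a c
    have h2 : ∑ z : ZMod p, ((1/p : ℝ) : ℂ) * ZMod.stdAddChar (c * z) = 0 := by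
      rw [← Finset.mul_sum]
      have h3 : ∑ z : ZMod p, ZMod.stdAddChar (z * c) = 0 := by
        have h4 := AddChar.sum_mulShift c (ZMod.isPrimitive_stdAddChar p)
        rw [if_neg hc] at h4
        exact_mod_cast h4
      rw [Finset.sum_congr rfl fun z _ => by rw [mul_comm c z], h3, mul_zero]
    calc E c = ∑ z : ZMod p, ((pushU f z : ℂ) * ZMod.stdAddChar (c*z)
          - ((1/p:ℝ):ℂ) * ZMod.stdAddChar (c*z)) := by
          refine Finset.sum_congr rfl fun z _ => ?_
          simp only [hE, he]
          push_cast
          ring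
      _ = (1/2^t) * ∏ i, (1 + ZMod.stdAddChar (c * (a i : ZMod p))) := by
          rw [← hf] at h1
          rw [Finset.sum_sub_distrib, h2, sub_zero, h1]
  -- bound on each nonzero Fourier coefficient
  have habsE : ∀ c : ZMod p, c ≠ 0 → ‖E c‖ ≤ B := by
    intro c hc
    rw [hEc c hc, norm_mul, norm_prod]
    have hfac : ∀ i : Fin t, ‖1 + ZMod.stdAddChar (c * (a i : ZMod p))‖
        ≤ 2 * Real.exp (-1/(p:ℝ)^2) := by
      intro i
      exact factor_bound' p hp2 _ (mul_ne_zero hc (ha i))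
    have hprod : ∏ i : Fin t, ‖1 + ZMod.stdAddChar (c * (a i : ZMod p))‖
        ≤ (2 * Real.exp (-1/(p:ℝ)^2))^t := by
      calc ∏ i : Fin t, ‖1 + ZMod.stdAddChar (c * (a i : ZMod p))‖
          ≤ ∏ _i : Fin t, (2 * Real.exp (-1/(p:ℝ)^2)) :=
            Finset.prod_le_prod (fun i _ => norm_nonneg _) (fun i _ => hfac i)
        _ = (2 * Real.exp (-1/(p:ℝ)^2))^t := by
            rw [Finset.prod_const, Finset.card_univ, Fintype.card_fin]
    have habs1 : ‖(1:ℂ)/2^t‖ = 1/2^t := by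
      rw [norm_div, norm_one, norm_pow, Complex.norm_two]
    rw [habs1]
    calc (1/2^t : ℝ) * ∏ i : Fin t, ‖1 + ZMod.stdAddChar (c * (a i : ZMod p))‖
        ≤ (1/2^t) * (2 * Real.exp (-1/(p:ℝ)^2))^t := by
          refine mul_le_mul_of_nonneg_left hprod (by positivity)
      _ = B := by
          rw [mul_pow, hB, ← Real.exp_nat_mul]
          rw [show (t:ℝ) * (-1/(p:ℝ)^2) = -(t:ℝ)/(p:ℝ)^2 by ring]
          field_simp
  -- Parseval bound
  have hsum_sq : ∑ z : ZMod p, (e z)^2 ≤ B^2 := by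
    have hpar := parseval' p e
    have hbd : ∑ c : ZMod p, Complex.normSq (E c) ≤ p * B^2 := by
      calc ∑ c : ZMod p, Complex.normSq (E c) ≤ ∑ _c : ZMod p, B^2 := by
            refine Finset.sum_le_sum fun c _ => ?_
            by_cases hc : c = 0
            · rw [hc, hE0]
              simp only [map_zero]
              positivity
            · rw [← Complex.sq_norm]
              exact pow_le_pow_left₀ (norm_nonneg _) (habsE c hc) 2
        _ = p * B^2 := by
            rw [Finset.sum_const, Finset.card_univ, ZMod.card, nsmul_eq_mul]
    rw [hE] at hbd
    rw [hpar] at hbd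
    exact le_of_mul_le_mul_left hbd hp0
  -- Cauchy–Schwarz
  have hCS : (∑ z : ZMod p, |e z|)^2 ≤ p * ∑ z : ZMod p, (e z)^2 := by
    have h := Finset.sum_mul_sq_le_sq_mul_sq univ (fun _ : ZMod p => (1:ℝ)) (fun z => |e z|)
    simpa [sq_abs, Finset.card_univ, ZMod.card] using h
  have hSnn : 0 ≤ ∑ z : ZMod p, |e z| := Finset.sum_nonneg fun z _ => abs_nonneg _
  have hfin : ∑ z : ZMod p, |e z| ≤ Real.sqrt p * B := by
    have h1 : (∑ z : ZMod p, |e z|)^2 ≤ p * B^2 := by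
      calc (∑ z : ZMod p, |e z|)^2 ≤ p * ∑ z : ZMod p, (e z)^2 := hCS
        _ ≤ p * B^2 := by exact mul_le_mul_of_nonneg_left hsum_sq hp0.le
    have h2 := Real.sqrt_le_sqrt h1
    rw [Real.sqrt_sq hSnn, Real.sqrt_mul hp0.le, Real.sqrt_sq hBpos.le] at h2
    exact h2
  have hsqrtB : 0 ≤ Real.sqrt p * B := by positivity
  rw [tvd]
  calc (1/2) * ∑ z : ZMod p, |pushU f z - 1/(p:ℝ)| = (1/2) * ∑ z : ZMod p, |e z| := by rfl
    _ ≤ (1/2) * (Real.sqrt p * B) := by linarith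
    _ ≤ Real.sqrt p * B := by linarith
end

section
/- For every α ∈ (0,1) and all constants c₁, c₂, c₃ > 0, there exist C > 0 and n₀ ∈ ℕ such that for every integer n ≥ n₀ the following holds: for every prime p with c₁·n^α ≤ p ≤ c₂·n^α, every integer t ≥ c₃·p³, every integer a₀, all integers a₁,…,a_t each nonzero modulo p, and every subset A ⊆ ZMod p, if x is uniform on {0,1}^t then |Pr_x[(a₀ + Σ_{i=1}^t a_i·x_i) mod p ∈ A] − |A|/p| ≤ C/n. -/
open Finset Filter

lemma addchar_map_sum {ι A M : Type*} [AddCommMonoid A] [CommMonoid M] (ψ : AddChar A M)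
    (s : Finset ι) (f : ι → A) : ψ (∑ i ∈ s, f i) = ∏ i ∈ s, ψ (f i) := by
  classical
  induction s using Finset.induction with
  | empty => simp
  | insert _ _ h ih => rw [Finset.sum_insert h, Finset.prod_insert h, ψ.map_add_eq_mul, ih]

lemma fourier_identity {p : ℕ} [hp : Fact p.Prime] (t : ℕ) (a₀ : ℤ) (a : Fin t → ℤ)
    (A : Finset (ZMod p)) :
    ((univ.filter (fun x : Fin t → Bool =>
        (((a₀ + ∑ i, if x i then a i else 0) : ℤ) : ZMod p) ∈ A)).card : ℂ) * p
      = ∑ k : ZMod p, (∑ s ∈ A, ZMod.stdAddChar (-(k * s))) *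
          (ZMod.stdAddChar (k * (a₀ : ZMod p)) *
            ∏ i, (1 + ZMod.stdAddChar (k * ((a i : ZMod p))))) := by
  set ψ := ZMod.stdAddChar (N := p) with hψ
  set S : (Fin t → Bool) → ZMod p :=
    fun x => (((a₀ + ∑ i, if x i then a i else 0) : ℤ) : ZMod p) with hS
  have orth : ∀ b : ZMod p, ∑ k : ZMod p, ψ (k * b) = if b = 0 then (p:ℂ) else 0 := by
    intro b
    have := AddChar.sum_mulShift b (ZMod.isPrimitive_stdAddChar p)
    simpa [ZMod.card] using this
  have hSx : ∀ x : Fin t → Bool,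
      S x = (a₀ : ZMod p) + ∑ i, (if x i then ((a i : ZMod p)) else 0) := by
    intro x
    rw [hS]
    push_cast [apply_ite (Int.cast : ℤ → ZMod p)]
    ring
  have stepB : ∀ k : ZMod p, ∑ x : Fin t → Bool, ψ (k * S x)
      = ψ (k * (a₀ : ZMod p)) * ∏ i, (1 + ψ (k * ((a i : ZMod p)))) := by
    intro k
    have h1 : ∀ x : Fin t → Bool, ψ (k * S x)
        = ψ (k * (a₀ : ZMod p)) * ∏ i, (if x i then ψ (k * ((a i : ZMod p))) else 1) := by
      intro x
      rw [hSx x, mul_add, ψ.map_add_eq_mul, Finset.mul_sum, addchar_map_sum]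
      congr 1
      apply Finset.prod_congr rfl
      intro i _
      by_cases h : x i <;> simp [h]
    simp_rw [h1]
    rw [← Finset.mul_sum]
    congr 1
    rw [show (∑ x : Fin t → Bool, ∏ i, if x i then ψ (k * ((a i : ZMod p))) else 1)
        = ∏ i, ∑ b : Bool, (if b = true then ψ (k * ((a i : ZMod p))) else 1) from
      (Fintype.prod_sum fun i (b : Bool) => if b = true then ψ (k * ((a i : ZMod p))) else 1).symm]
    apply Finset.prod_congr rfl
    intro i _
    rw [Fintype.sum_bool]
    simp [add_comm]
  have expand : ∀ (x : Fin t → Bool) (s k : ZMod p),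
      ψ (k * (S x - s)) = ψ (-(k * s)) * ψ (k * S x) := by
    intro x s k
    rw [← ψ.map_add_eq_mul]
    congr 1
    ring
  calc ((univ.filter (fun x : Fin t → Bool => S x ∈ A)).card : ℂ) * p
      = ∑ x : Fin t → Bool, (if S x ∈ A then (p:ℂ) else 0) := by
        rw [← Finset.sum_filter, Finset.sum_const, nsmul_eq_mul]
    _ = ∑ x : Fin t → Bool, ∑ s ∈ A, (if S x = s then (p:ℂ) else 0) := by
        apply Finset.sum_congr rfl
        intro x _
        rw [Finset.sum_ite_eq A (S x) (fun _ => (p:ℂ))]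
    _ = ∑ x : Fin t → Bool, ∑ s ∈ A, ∑ k : ZMod p, ψ (k * (S x - s)) := by
        apply Finset.sum_congr rfl; intro x _
        apply Finset.sum_congr rfl; intro s _
        rw [orth (S x - s)]
        simp [sub_eq_zero]
    _ = ∑ k : ZMod p, (∑ s ∈ A, ψ (-(k * s))) * (∑ x : Fin t → Bool, ψ (k * S x)) := by
        simp_rw [expand, Finset.sum_mul, Finset.mul_sum]
        calc ∑ x : Fin t → Bool, ∑ s ∈ A, ∑ k : ZMod p, ψ (-(k * s)) * ψ (k * S x)
            = ∑ s ∈ A, ∑ x : Fin t → Bool, ∑ k : ZMod p, ψ (-(k * s)) * ψ (k * S x) :=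
              Finset.sum_comm
          _ = ∑ s ∈ A, ∑ k : ZMod p, ∑ x : Fin t → Bool, ψ (-(k * s)) * ψ (k * S x) :=
              Finset.sum_congr rfl (fun s _ => Finset.sum_comm)
          _ = ∑ k : ZMod p, ∑ s ∈ A, ∑ x : Fin t → Bool, ψ (-(k * s)) * ψ (k * S x) :=
              Finset.sum_comm
    _ = _ := Finset.sum_congr rfl (fun k _ => by rw [stepB k])

lemma abs_one_add_char {p : ℕ} [NeZero p] (u : ZMod p) :
    ‖1 + ZMod.stdAddChar u‖ = 2 * |Real.cos (Real.pi * u.val / p)| := by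
  have h : ZMod.stdAddChar u = Complex.exp ((2 * (Real.pi * u.val / p) : ℝ) * Complex.I) := by
    rw [ZMod.stdAddChar_apply, ZMod.toCircle_apply]
    push_cast
    ring_nf
  set θ : ℝ := Real.pi * u.val / p with hθ
  have key : 1 + Complex.exp ((2*θ : ℝ) * Complex.I)
      = Complex.exp ((θ:ℝ) * Complex.I) * (2 * Complex.cos θ) := by
    rw [Complex.two_cos, mul_add, ← Complex.exp_add, ← Complex.exp_add]
    push_cast
    ring_nf
    rw [Complex.exp_zero]
    exact add_comm _ _
  rw [h, key, norm_mul, Complex.norm_exp_ofReal_mul_I, one_mul, ← Complex.ofReal_cos]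
  rw [show (2 : ℂ) * (Real.cos θ : ℂ) = ((2 * Real.cos θ : ℝ) : ℂ) by push_cast; ring]
  rw [Complex.norm_real, Real.norm_eq_abs, abs_mul, abs_two]

lemma abs_cos_le {p m : ℕ} (hp : 2 ≤ p) (h1 : 1 ≤ m) (h2 : m ≤ p - 1) :
    |Real.cos (Real.pi * m / p)| ≤ Real.cos (Real.pi / p) := by
  have hp0 : (0:ℝ) < p := by positivity
  have hm1 : (1:ℝ) ≤ m := by exact_mod_cast h1
  have hm2 : (m:ℝ) ≤ p - 1 := by
    have : (m:ℝ) ≤ ((p - 1 : ℕ) : ℝ) := by exact_mod_cast h2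
    rw [Nat.cast_sub (by omega)] at this; simpa using this
  have hlow : Real.pi / p ≤ Real.pi * m / p := by
    gcongr
    nlinarith [Real.pi_pos]
  have hhigh : Real.pi * m / p ≤ Real.pi - Real.pi / p := by
    rw [div_le_iff₀ hp0, sub_mul, div_mul_cancel₀ _ hp0.ne']
    nlinarith [Real.pi_pos]
  have hpip : 0 < Real.pi / p := by positivity
  rcases le_or_gt 0 (Real.cos (Real.pi * m / p)) with hc | hc
  · rw [abs_of_nonneg hc]
    apply Real.cos_le_cos_of_nonneg_of_le_pi hpip.le ?_ hlow
    linarith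
  · rw [abs_of_neg hc, ← Real.cos_pi_sub]
    apply Real.cos_le_cos_of_nonneg_of_le_pi hpip.le ?_ (by linarith)
    have : 0 ≤ Real.pi * m / p := by positivity
    linarith

lemma fourier_bound {p : ℕ} (hp : p.Prime) (t : ℕ) (a₀ : ℤ) (a : Fin t → ℤ)
    (ha : ∀ i, ((a i : ZMod p) ≠ 0)) (A : Finset (ZMod p)) :
    |((univ.filter (fun x : Fin t → Bool =>
          (((a₀ + ∑ i, if x i then a i else 0) : ℤ) : ZMod p) ∈ A)).card : ℝ) / 2 ^ t
        - (A.card : ℝ) / (p : ℝ)| ≤ p * Real.cos (Real.pi / p) ^ t := by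
  haveI : Fact p.Prime := ⟨hp⟩
  haveI : NeZero p := ⟨hp.ne_zero⟩
  have hppos : (0:ℝ) < p := by exact_mod_cast hp.pos
  have h2p : (2:ℝ) ≤ p := by exact_mod_cast hp.two_le
  set ψ := ZMod.stdAddChar (N := p) with hψ
  set N : ℕ := (univ.filter (fun x : Fin t → Bool =>
      (((a₀ + ∑ i, if x i then a i else 0) : ℤ) : ZMod p) ∈ A)).card with hN
  set c : ZMod p → ℂ := fun k => ∑ s ∈ A, ψ (-(k * s)) with hc
  set T : ZMod p → ℂ := fun k =>
    ψ (k * (a₀ : ZMod p)) * ∏ i, (1 + ψ (k * ((a i : ZMod p)))) with hT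
  set E : ℂ := ∑ k ∈ univ.erase (0 : ZMod p), c k * T k with hE
  have hid : (N : ℂ) * p = (A.card : ℂ) * 2 ^ t + E := by
    have h0 : c 0 * T 0 = (A.card : ℂ) * 2 ^ t := by
      have hc0 : c 0 = (A.card : ℂ) := by simp [hc]
      have hT0 : T 0 = 2 ^ t := by
        rw [hT]
        simp only [zero_mul, AddChar.map_zero_eq_one, one_mul]
        norm_num
      rw [hc0, hT0]
    rw [hN, fourier_identity t a₀ a A,
      ← Finset.add_sum_erase univ (fun k => c k * T k) (mem_univ (0 : ZMod p)), h0, hE]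
  have hpne : (p : ℂ) ≠ 0 := Nat.cast_ne_zero.mpr hp.ne_zero
  have h2ne : ((2 : ℂ)) ^ t ≠ 0 := pow_ne_zero t two_ne_zero
  have hdiff : (N : ℂ) / 2 ^ t - (A.card : ℂ) / p = E / (p * 2 ^ t) := by
    have hE' : E = (N : ℂ) * p - (A.card : ℂ) * 2 ^ t := by linear_combination (-1 : ℂ) * hid
    rw [hE']
    field_simp
  -- abs bounds
  have habsψ : ∀ u : ZMod p, ‖ψ u‖ = 1 := by
    intro u
    rw [hψ, ZMod.stdAddChar_apply]
    exact Circle.norm_coe _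
  have hcosnn : 0 ≤ Real.cos (Real.pi / p) := by
    apply Real.cos_nonneg_of_mem_Icc
    constructor
    · have h1 : 0 ≤ Real.pi / p := by positivity
      nlinarith [Real.pi_pos]
    · rw [div_le_div_iff₀ hppos two_pos]
      nlinarith [Real.pi_pos]
  have hck : ∀ k : ZMod p, ‖c k‖ ≤ (p : ℝ) := by
    intro k
    calc ‖c k‖ ≤ ∑ s ∈ A, ‖ψ (-(k * s))‖ := by
          exact norm_sum_le _ _
      _ = A.card := by simp [habsψ]
      _ ≤ (p : ℝ) := by
          have h1 : A.card ≤ Fintype.card (ZMod p) := Finset.card_le_univ A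
          rw [ZMod.card] at h1
          exact_mod_cast h1
  have hTk : ∀ k ∈ univ.erase (0 : ZMod p),
      ‖T k‖ ≤ (2 * Real.cos (Real.pi / p)) ^ t := by
    intro k hk
    have hk0 : k ≠ 0 := (Finset.mem_erase.mp hk).1
    rw [hT]
    simp only
    rw [norm_mul, habsψ, one_mul, norm_prod]
    calc ∏ i, ‖1 + ψ (k * ((a i : ZMod p)))‖
        ≤ ∏ _i : Fin t, (2 * Real.cos (Real.pi / p)) := by
          apply Finset.prod_le_prod
          · intro i _; exact norm_nonneg _
          · intro i _
            have hne : k * ((a i : ZMod p)) ≠ 0 := mul_ne_zero hk0 (ha i)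
            have hval1 : 1 ≤ (k * ((a i : ZMod p))).val := by
              rcases Nat.eq_zero_or_pos (k * ((a i : ZMod p))).val with h | h
              · exact absurd ((ZMod.val_eq_zero _).mp h) hne
              · exact h
            have hval2 : (k * ((a i : ZMod p))).val ≤ p - 1 := by
              exact Nat.le_sub_one_of_lt (ZMod.val_lt (k * ((a i : ZMod p))))
            rw [abs_one_add_char]
            have := abs_cos_le hp.two_le hval1 hval2
            linarith
      _ = (2 * Real.cos (Real.pi / p)) ^ t := by
          rw [Finset.prod_const, Finset.card_univ, Fintype.card_fin]
  have hEbound : ‖E‖ ≤ (p : ℝ) * ((p : ℝ) * (2 * Real.cos (Real.pi / p)) ^ t) := by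
    calc ‖E‖ ≤ ∑ k ∈ univ.erase (0 : ZMod p), ‖c k * T k‖ :=
          norm_sum_le _ _
      _ ≤ ∑ _k ∈ univ.erase (0 : ZMod p), (p : ℝ) * (2 * Real.cos (Real.pi / p)) ^ t := by
          apply Finset.sum_le_sum
          intro k hk
          rw [norm_mul]
          exact mul_le_mul (hck k) (hTk k hk) (norm_nonneg _) (by positivity)
      _ = ((univ.erase (0 : ZMod p)).card : ℝ) * ((p:ℝ) * (2 * Real.cos (Real.pi / p)) ^ t) := by
          rw [Finset.sum_const, nsmul_eq_mul]
      _ ≤ (p : ℝ) * ((p:ℝ) * (2 * Real.cos (Real.pi / p)) ^ t) := by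
          apply mul_le_mul_of_nonneg_right _ (by positivity)
          have h1 : (univ.erase (0 : ZMod p)).card ≤ Fintype.card (ZMod p) :=
            Finset.card_le_univ _
          rw [ZMod.card] at h1
          exact_mod_cast h1
  -- convert real abs to complex abs
  have hcast : ((((N : ℝ) / 2 ^ t - (A.card : ℝ) / p) : ℝ) : ℂ)
      = (N : ℂ) / 2 ^ t - (A.card : ℂ) / p := by push_cast; ring
  have habs : |(N : ℝ) / 2 ^ t - (A.card : ℝ) / p|
      = ‖(N : ℂ) / 2 ^ t - (A.card : ℂ) / p‖ := by
    rw [← hcast, Complex.norm_real, Real.norm_eq_abs]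
  rw [habs, hdiff, norm_div]
  have hden : ‖(p : ℂ) * 2 ^ t‖ = (p : ℝ) * 2 ^ t := by
    rw [norm_mul, norm_pow]
    simp [Complex.norm_natCast]
  rw [hden]
  rw [div_le_iff₀ (by positivity)]
  calc ‖E‖ ≤ (p : ℝ) * ((p : ℝ) * (2 * Real.cos (Real.pi / p)) ^ t) := hEbound
    _ = (p : ℝ) * Real.cos (Real.pi / p) ^ t * ((p : ℝ) * 2 ^ t) := by
        rw [mul_pow]; ring

lemma eventual_bound (α : ℝ) (hα0 : 0 < α) (c₂ b : ℝ) (hb : 0 < b) :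
    ∀ᶠ n : ℕ in atTop,
      (n : ℝ) * (c₂ * (n : ℝ) ^ α) * Real.exp (-b * (n : ℝ) ^ α) ≤ 1 := by
  have h1 : Tendsto (fun x : ℝ => c₂ * (x ^ ((1 + α) / α) * Real.exp (-b * x)))
      atTop (nhds 0) := by
    simpa using (tendsto_rpow_mul_exp_neg_mul_atTop_nhds_zero ((1 + α) / α) b hb).const_mul c₂
  have h2 : Tendsto (fun n : ℕ => (n : ℝ) ^ α) atTop atTop :=
    (tendsto_rpow_atTop hα0).comp tendsto_natCast_atTop_atTop
  have h3 := h1.comp h2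
  have h4 : Tendsto (fun n : ℕ => (n : ℝ) * (c₂ * (n : ℝ) ^ α) * Real.exp (-b * (n : ℝ) ^ α))
      atTop (nhds 0) := by
    apply h3.congr'
    filter_upwards [eventually_ge_atTop 1] with n hn
    have hn0 : (0 : ℝ) < n := by exact_mod_cast hn
    show c₂ * (((n:ℝ) ^ α) ^ ((1 + α) / α) * Real.exp (-b * (n:ℝ) ^ α)) = _
    have heq : ((n:ℝ) ^ α) ^ ((1 + α) / α) = (n : ℝ) * (n : ℝ) ^ α := by
      rw [← Real.rpow_mul hn0.le]
      have h' : α * ((1 + α) / α) = 1 + α := by field_simp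
      rw [h', Real.rpow_add hn0, Real.rpow_one]
    rw [heq]; ring
  filter_upwards [h4.eventually_lt_const zero_lt_one] with n hn using hn.le

lemma cos_le_exp_aux (x u : ℝ) (hxnn : 0 ≤ x) (hx1 : x ≤ 1) (hu : 0 < u)
    (hlow : 3 * u ≤ x ^ 2) : Real.cos x ≤ Real.exp (-u) := by
  have hcb := Real.cos_bound (by rw [abs_of_nonneg hxnn]; exact hx1)
  have e1 : Real.cos x - (1 - x ^ 2 / 2) ≤ |x| ^ 4 * (5 / 96) := le_of_abs_le hcb
  have e2 : |x| ^ 4 = (x ^ 2) ^ 2 := by rw [abs_of_nonneg hxnn]; ring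
  have hx2 : x ^ 2 ≤ 1 := by nlinarith
  have e4 : (x ^ 2) ^ 2 ≤ x ^ 2 := by nlinarith [sq_nonneg x]
  have hexp : -u + 1 ≤ Real.exp (-u) := Real.add_one_le_exp (-u)
  rw [e2] at e1
  linarith

set_option maxHeartbeats 1000000 in
theorem stmt7 (α : ℝ) (hα0 : 0 < α) (hα1 : α < 1)
    (c₁ c₂ c₃ : ℝ) (hc₁ : 0 < c₁) (hc₂ : 0 < c₂) (hc₃ : 0 < c₃) :
    ∃ C : ℝ, 0 < C ∧ ∃ n₀ : ℕ, ∀ n : ℕ, n₀ ≤ n →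
      ∀ p : ℕ, p.Prime →
        c₁ * (n : ℝ) ^ α ≤ (p : ℝ) → (p : ℝ) ≤ c₂ * (n : ℝ) ^ α →
      ∀ t : ℕ, c₃ * (p : ℝ) ^ 3 ≤ (t : ℝ) →
      ∀ a₀ : ℤ, ∀ a : Fin t → ℤ, (∀ i, ((a i : ZMod p) ≠ 0)) →
      ∀ A : Finset (ZMod p),
        |((univ.filter (fun x : Fin t → Bool =>
              (((a₀ + ∑ i, if x i then a i else 0) : ℤ) : ZMod p) ∈ A)).card : ℝ)
            / 2 ^ t
          - (A.card : ℝ) / (p : ℝ)| ≤ C / (n : ℝ) := by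
  refine ⟨1, one_pos, ?_⟩
  have hb : 0 < 3 * c₃ * c₁ := by positivity
  have hev1 := eventual_bound α hα0 c₂ (3 * c₃ * c₁) hb
  have hev2 : ∀ᶠ n : ℕ in atTop, (4 : ℝ) ≤ c₁ * (n : ℝ) ^ α := by
    have h2 : Tendsto (fun n : ℕ => c₁ * (n : ℝ) ^ α) atTop atTop :=
      ((tendsto_rpow_atTop hα0).comp tendsto_natCast_atTop_atTop).const_mul_atTop hc₁
    exact h2.eventually_ge_atTop 4
  obtain ⟨n₀, hn₀⟩ := eventually_atTop.mp ((hev1.and hev2).and (eventually_ge_atTop 1))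
  refine ⟨n₀, ?_⟩
  intro n hn p hp hp1 hp2 t ht a₀ a ha A
  obtain ⟨⟨hA1, hA2⟩, hA3⟩ := hn₀ n hn
  haveI : Fact p.Prime := ⟨hp⟩
  have hppos : (0 : ℝ) < p := by exact_mod_cast hp.pos
  have hp4 : (4 : ℝ) ≤ (p : ℝ) := le_trans hA2 hp1
  have hn1 : (0 : ℝ) < n := by exact_mod_cast Nat.lt_of_lt_of_le Nat.zero_lt_one hA3
  have main := fourier_bound hp t a₀ a ha A
  refine main.trans ?_
  set x : ℝ := Real.pi / p with hxdef
  have hxnn : 0 ≤ x := by positivity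
  have hx1 : |x| ≤ 1 := by
    rw [abs_of_nonneg hxnn, hxdef, div_le_one hppos]
    linarith [Real.pi_le_four]
  have hcosnn : 0 ≤ Real.cos x := by
    apply Real.cos_nonneg_of_mem_Icc
    constructor
    · linarith [Real.pi_pos]
    · rw [hxdef, div_le_div_iff₀ hppos two_pos]
      nlinarith [Real.pi_pos]
  have hstep1 : Real.cos x ≤ Real.exp (-(3 / (p : ℝ) ^ 2)) := by
    apply cos_le_exp_aux x _ hxnn (by rw [abs_of_nonneg hxnn] at hx1; exact hx1)
      (by positivity)
    have hxlow : 3 / (p : ℝ) ≤ x := by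
      rw [hxdef]
      gcongr
      linarith [Real.pi_gt_three]
    have h9 : 3 * (3 / (p:ℝ)^2) = (3 / (p:ℝ))^2 := by ring
    rw [h9]
    apply pow_le_pow_left₀ (by positivity) hxlow
  have hstep2 : Real.cos x ^ t ≤ Real.exp (-(3 * c₃) * p) := by
    calc Real.cos x ^ t ≤ Real.exp (-(3 / (p : ℝ) ^ 2)) ^ t :=
          pow_le_pow_left₀ hcosnn hstep1 t
      _ = Real.exp ((t : ℝ) * (-(3 / (p : ℝ) ^ 2))) := by
          rw [Real.exp_nat_mul]
      _ ≤ Real.exp (-(3 * c₃) * p) := by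
          apply Real.exp_le_exp.mpr
          have h7 : (3 * c₃ * (p : ℝ)) * (p : ℝ) ^ 2 ≤ 3 * t := by nlinarith [ht]
          have h8 : 3 * c₃ * (p : ℝ) ≤ 3 * t / (p : ℝ) ^ 2 :=
            (le_div_iff₀ (by positivity)).mpr h7
          have h9 : (t : ℝ) * (-(3 / (p : ℝ) ^ 2)) = -(3 * t / (p : ℝ) ^ 2) := by ring
          rw [h9]
          linarith
  have hstep3 : (p : ℝ) * Real.exp (-(3 * c₃) * p)
      ≤ (c₂ * (n : ℝ) ^ α) * Real.exp (-(3 * c₃ * c₁) * (n : ℝ) ^ α) := by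
    apply mul_le_mul hp2 ?_ (Real.exp_pos _).le (by positivity)
    apply Real.exp_le_exp.mpr
    nlinarith [hp1]
  have hstep4 : (c₂ * (n : ℝ) ^ α) * Real.exp (-(3 * c₃ * c₁) * (n : ℝ) ^ α) ≤ 1 / n := by
    rw [le_div_iff₀ hn1]
    calc (c₂ * (n : ℝ) ^ α) * Real.exp (-(3 * c₃ * c₁) * (n : ℝ) ^ α) * n
        = (n : ℝ) * (c₂ * (n : ℝ) ^ α) * Real.exp (-(3 * c₃ * c₁) * (n : ℝ) ^ α) := by ring
      _ ≤ 1 := hA1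
  calc (p : ℝ) * Real.cos x ^ t ≤ (p : ℝ) * Real.exp (-(3 * c₃) * p) :=
        mul_le_mul_of_nonneg_left hstep2 hppos.le
    _ ≤ (c₂ * (n : ℝ) ^ α) * Real.exp (-(3 * c₃ * c₁) * (n : ℝ) ^ α) := hstep3
    _ ≤ 1 / n := hstep4
end

section
/- Fix m ≥ 1 and θ ∈ ℝ, and let A = A_{m,θ} be the 2^m × 2^m complex matrix defined below. Then for all x, y ∈ {0,1}^m: (1) the diagonal entry (AᴴA)_{x,x} = 1; (2) the entry (AᴴA)_{x̄,x} = (−1)^{|x|}·(−i)^m·sin^m(θ), where x̄ is the bitwise complement of x and |x| its Hamming weight; and (3) (AᴴA)_{y,x} = 0 whenever y ∉ {x, x̄}. Here Aᴴ denotes the conjugate transpose of A, so (AᴴA)_{y,x} = Σ_z conj(A_{z,y})·A_{z,x}. -/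
/-!
Column `x` of `A` is the product state `⊗ⱼ R(θ x_{j-1}) e_{x_j}`, so `(AᴴA)_{y,x}` factorises as
`∏ⱼ (R(θ y_{j-1})ᴴ R(θ x_{j-1}))_{y_j,x_j} = ∏ⱼ R(θ (x_{j-1} - y_{j-1}))_{y_j,x_j}`.
For `y = x` every factor is `R(0)_{x_j,x_j} = 1`; for `y = x̄` every factor is the off-diagonal entry
`i sin(±θ)`, with the sign given by `x_{j-1}`. Otherwise, going around the cycle, some position has
`y_{j-1} = x_{j-1}` but `y_j ≠ x_j`, and there the factor is an off-diagonal entry of `R(0) = 1`.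
-/

open Finset Matrix

/-- The 2×2 matrix `R(φ) = exp(iφX) = [[cos φ, i sin φ],[i sin φ, cos φ]]`,
with entries indexed by `Bool`. -/
noncomputable def Rc (φ : ℝ) (a b : Bool) : ℂ :=
  if a = b then (Real.cos φ : ℂ) else Complex.I * (Real.sin φ : ℂ)

/-- The `2^m × 2^m` matrix `A_{m,θ}` with entries
`(A_{m,θ})_{y,x} = Π_j R(θ·x_{j−1})_{y_j, x_j}` (indices of `x` cyclic). -/
noncomputable def Amat (m : ℕ) (θ : ℝ) :
    Matrix (Fin m → Bool) (Fin m → Bool) ℂ :=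
  fun y x => ∏ j : Fin m,
    Rc (θ * (if x ⟨(j.val + m - 1) % m, by have := j.isLt; exact Nat.mod_lt _ (by omega)⟩
          then 1 else 0))
      (y j) (x j)

lemma Rc_zero (a b : Bool) : Rc 0 a b = if a = b then 1 else 0 := by
  simp [Rc]

lemma sum_conj_Rc_mul_Rc (φ ψ : ℝ) (a b : Bool) :
    ∑ c, starRingEnd ℂ (Rc φ c a) * Rc ψ c b = Rc (ψ - φ) a b := by
  cases a <;> cases b <;>
    simp [Rc, Real.cos_sub, Real.sin_sub, Complex.conj_ofReal,
      -Complex.ofReal_cos, -Complex.ofReal_sin] <;> ring_nf <;> simp [Complex.I_sq]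

section RotationProduct

variable {ι : Type*} [Fintype ι] [DecidableEq ι]

noncomputable def rotationProduct (φ : (ι → Bool) → ι → ℝ) : Matrix (ι → Bool) (ι → Bool) ℂ :=
  of fun y x => ∏ j, Rc (φ x j) (y j) (x j)

lemma conjTranspose_mul_rotationProduct_apply (φ : (ι → Bool) → ι → ℝ) (y x : ι → Bool) :
    ((rotationProduct φ)ᴴ * rotationProduct φ) y x = ∏ j, Rc (φ x j - φ y j) (y j) (x j) := by
  simp only [mul_apply, conjTranspose_apply, rotationProduct, of_apply, star_prod,
    ← prod_mul_distrib]
  rw [← Fintype.prod_sum (fun j c => star (Rc (φ y j) c (y j)) * Rc (φ x j) c (x j))]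
  exact prod_congr rfl fun j _ => sum_conj_Rc_mul_Rc _ _ _ _

end RotationProduct

lemma finRotate_symm_apply_eq_mk {m : ℕ} (j : Fin m) :
    (finRotate m).symm j = ⟨(j.val + m - 1) % m, Nat.mod_lt _ (by have := j.isLt; omega)⟩ := by
  obtain _ | n := m
  · exact j.elim0
  rw [finRotate_symm_apply]
  ext
  simp only [Fin.coe_sub_one]
  split_ifs with h
  · simp [h]
  · have := Fin.val_ne_zero_iff.mpr h
    rw [show j.val + (n + 1) - 1 = j.val - 1 + (n + 1) by omega, Nat.add_mod_right,
      Nat.mod_eq_of_lt (by omega)]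

lemma Amat_eq_rotationProduct (m : ℕ) (θ : ℝ) :
    Amat m θ = rotationProduct fun x j => θ * if x ((finRotate m).symm j) then 1 else 0 := by
  ext y x
  simp only [Amat, rotationProduct, of_apply, finRotate_symm_apply_eq_mk]

lemma exists_finRotate_symm_and_not {m : ℕ} {p : Fin m → Prop} {k l : Fin m}
    (hk : p k) (hl : ¬ p l) : ∃ j, p ((finRotate m).symm j) ∧ ¬ p j := by
  by_contra! h
  have hp : ∀ t, p ((finRotate m)^[t] k) := by
    intro t
    induction t with
    | zero => exact hk
    | succ t ih =>
      rw [Function.iterate_succ_apply']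
      exact h _ (by rwa [Equiv.symm_apply_apply])
  have := k.neZero
  have hl' : (finRotate m)^[(l - k).val] k = l := by
    rw [← finCycle_eq_finRotate_iterate, finCycle_apply, add_sub_cancel]
  exact hl (hl' ▸ hp _)

section Gram

variable (m : ℕ) (θ : ℝ)

lemma conjTranspose_mul_Amat_apply (y x : Fin m → Bool) :
    ((Amat m θ)ᴴ * Amat m θ) y x = ∏ j, Rc ((θ * if x ((finRotate m).symm j) then 1 else 0)
      - θ * if y ((finRotate m).symm j) then 1 else 0) (y j) (x j) := by
  rw [Amat_eq_rotationProduct, conjTranspose_mul_rotationProduct_apply]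

lemma conjTranspose_mul_Amat_apply_self (x : Fin m → Bool) :
    ((Amat m θ)ᴴ * Amat m θ) x x = 1 := by
  simp [conjTranspose_mul_Amat_apply, Rc_zero]

lemma conjTranspose_mul_Amat_apply_not (x : Fin m → Bool) :
    ((Amat m θ)ᴴ * Amat m θ) (fun j => !(x j)) x
      = (-1 : ℂ) ^ (∑ i, if x i then 1 else 0 : ℕ) * (-Complex.I) ^ m * (Real.sin θ : ℂ) ^ m := by
  have factor : ∀ b c : Bool,
      Rc ((θ * if b then 1 else 0) - θ * if !b then 1 else 0) (!c) c
        = -Complex.I * Real.sin θ * (-1) ^ (if b then 1 else 0 : ℕ) := by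
    intro b c
    cases b <;> simp [Rc]
  calc ((Amat m θ)ᴴ * Amat m θ) (fun j => !(x j)) x
      = ∏ j, -Complex.I * Real.sin θ * (-1) ^ (if x ((finRotate m).symm j) then 1 else 0 : ℕ) :=
        by rw [conjTranspose_mul_Amat_apply]; exact prod_congr rfl fun j _ => factor _ _
    _ = (-Complex.I * Real.sin θ) ^ m
          * (-1) ^ ∑ j, (if x ((finRotate m).symm j) then 1 else 0 : ℕ) := by
        rw [prod_mul_distrib, prod_const, card_univ, Fintype.card_fin, prod_pow_eq_pow_sum]
    _ = _ := by rw [Equiv.sum_comp (finRotate m).symm (fun i => if x i then 1 else 0)]; ring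

lemma conjTranspose_mul_Amat_apply_eq_zero {x y : Fin m → Bool} (hx : y ≠ x)
    (hnot : y ≠ fun j => !(x j)) : ((Amat m θ)ᴴ * Amat m θ) y x = 0 := by
  obtain ⟨l, hl⟩ := Function.ne_iff.mp hx
  obtain ⟨k, hk⟩ := Function.ne_iff.mp hnot
  obtain ⟨j, hpred, hj⟩ :=
    exists_finRotate_symm_and_not (p := fun i => y i = x i) (k := k) (by simpa using hk) hl
  rw [conjTranspose_mul_Amat_apply]
  exact prod_eq_zero (mem_univ j) (by rw [hpred, sub_self, Rc_zero, if_neg hj])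

end Gram

theorem stmt12_general (m : ℕ) (θ : ℝ) (x y : Fin m → Bool) :
    ((Amat m θ)ᴴ * Amat m θ) x x = 1 ∧
    ((Amat m θ)ᴴ * Amat m θ) (fun j => !(x j)) x
      = (-1 : ℂ) ^ (∑ i, if x i then 1 else 0 : ℕ) * (-Complex.I) ^ m
          * (Real.sin θ : ℂ) ^ m ∧
    (y ≠ x → y ≠ (fun j => !(x j)) → ((Amat m θ)ᴴ * Amat m θ) y x = 0) :=
  ⟨conjTranspose_mul_Amat_apply_self m θ x, conjTranspose_mul_Amat_apply_not m θ x,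
    conjTranspose_mul_Amat_apply_eq_zero m θ⟩

theorem stmt12 (m : ℕ) (hm : 1 ≤ m) (θ : ℝ) (x y : Fin m → Bool) :
    ((Amat m θ)ᴴ * Amat m θ) x x = 1 ∧
    ((Amat m θ)ᴴ * Amat m θ) (fun j => !(x j)) x
      = (-1 : ℂ) ^ (∑ i, if x i then 1 else 0 : ℕ) * (-Complex.I) ^ m
          * (Real.sin θ : ℂ) ^ m ∧
    (y ≠ x → y ≠ (fun j => !(x j)) → ((Amat m θ)ᴴ * Amat m θ) y x = 0) :=
  stmt12_general m θ x y
end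

section
/- For every integer m ≥ 1 there exist constants C > 0 and θ₀ > 0 such that for every θ ∈ ℝ with |θ| ≤ θ₀ there exists a 2^m × 2^m complex matrix U with UᴴU = I (i.e., U unitary) satisfying ‖A_{m,θ} − U‖_F ≤ C·|θ|^m, where ‖M‖_F = (Σ_{i,j} |M_{ij}|²)^{1/2} is the Frobenius norm. -/
open Finset Matrix

noncomputable def frobNorm {ι : Type*} [Fintype ι] (M : Matrix ι ι ℂ) : ℝ :=
  Real.sqrt (∑ i, ∑ j, ‖M i j‖ ^ 2)

/-- cyclic predecessor on `Fin m` -/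
def predF {m : ℕ} (j : Fin m) : Fin m :=
  ⟨(j.val + m - 1) % m, Nat.mod_lt _ (by have := j.isLt; omega)⟩

noncomputable def cval {m : ℕ} (x : Fin m → Bool) (j : Fin m) : ℝ :=
  if x (predF j) then 1 else 0

lemma Amat_eq (m : ℕ) (θ : ℝ) (y x : Fin m → Bool) :
    Amat m θ y x = ∏ j : Fin m, Rc (θ * cval x j) (y j) (x j) := rfl

lemma predF_iter {m : ℕ} (j : Fin m) (k : ℕ) :
    (predF^[k] j).val = (j.val + k * (m-1)) % m := by
  have hm : 1 ≤ m := j.pos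
  induction k with
  | zero => simp [Nat.mod_eq_of_lt j.isLt]
  | succ k ih =>
    rw [Function.iterate_succ_apply']
    show ((predF^[k] j).val + m - 1) % m = _
    rw [ih]
    have e1 : (j.val + k*(m-1)) % m + m - 1 = (j.val + k*(m-1)) % m + (m-1) := by omega
    rw [e1]
    have h2 : ((j.val + k*(m-1)) % m + (m-1)) % m = (j.val + k*(m-1) + (m-1)) % m :=
      (Nat.mod_modEq (j.val + k*(m-1)) m).add_right (m-1)
    rw [h2, show j.val + k*(m-1) + (m-1) = j.val + (k+1)*(m-1) by ring]

lemma predF_reaches {m : ℕ} (j₀ j : Fin m) : ∃ k, predF^[k] j₀ = j := by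
  have h1 : j.val < m := j.isLt
  have h2 : j₀.val < m := j₀.isLt
  refine ⟨m + j₀.val - j.val, ?_⟩
  apply Fin.ext
  rw [predF_iter]
  have key : j₀.val + (m + j₀.val - j.val)*(m-1) = j.val + (m + j₀.val - j.val - 1)*m := by
    zify [show j.val ≤ m + j₀.val by omega, show 1 ≤ m + j₀.val - j.val by omega,
      show 1 ≤ m by omega]
    ring
  rw [key, Nat.add_mul_mod_self_right, Nat.mod_eq_of_lt h1]

lemma allDiff {m : ℕ} (x x' : Fin m → Bool)
    (h : ∀ j, x j ≠ x' j → x (predF j) ≠ x' (predF j))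
    (j₀ : Fin m) (h₀ : x j₀ ≠ x' j₀) : ∀ j, x j ≠ x' j := by
  have it : ∀ k, x (predF^[k] j₀) ≠ x' (predF^[k] j₀) := by
    intro k; induction k with
    | zero => exact h₀
    | succ k ih => rw [Function.iterate_succ_apply']; exact h _ ih
  intro j; obtain ⟨k, hk⟩ := predF_reaches j₀ j; rw [← hk]; exact it k

lemma Rsum (φ ψ : ℝ) (u v : Bool) :
    ∑ b : Bool, (starRingEnd ℂ) (Rc φ b u) * Rc ψ b v = Rc (ψ - φ) u v := by
  cases u <;> cases v <;>
    simp only [Rc, Fintype.sum_bool, if_true, if_false, _root_.map_mul, Complex.conj_I,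
      Complex.conj_ofReal, Real.cos_sub, Real.sin_sub, reduceIte, Bool.true_eq_false,
      Bool.false_eq_true] <;>
    push_cast <;> ring_nf <;> simp [Complex.I_sq] <;> ring

lemma AtA (m : ℕ) (θ : ℝ) (x x' : Fin m → Bool) :
    ((Amat m θ)ᴴ * Amat m θ) x x'
      = ∏ j : Fin m, Rc (θ * cval x' j - θ * cval x j) (x j) (x' j) := by
  simp only [Matrix.mul_apply, Matrix.conjTranspose_apply, Amat_eq]
  have h1 : ∀ y : Fin m → Bool,
      star (∏ j : Fin m, Rc (θ * cval x j) (y j) (x j)) * ∏ j : Fin m, Rc (θ * cval x' j) (y j) (x' j)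
      = ∏ j : Fin m, ((starRingEnd ℂ) (Rc (θ * cval x j) (y j) (x j)) * Rc (θ * cval x' j) (y j) (x' j)) := by
    intro y
    rw [Finset.prod_mul_distrib]
    congr 1
    rw [star_prod]
    rfl
  simp only [h1]
  have h2 : ∑ y : Fin m → Bool, ∏ j : Fin m,
      ((starRingEnd ℂ) (Rc (θ * cval x j) (y j) (x j)) * Rc (θ * cval x' j) (y j) (x' j))
      = ∏ j : Fin m, ∑ b : Bool,
      ((starRingEnd ℂ) (Rc (θ * cval x j) b (x j)) * Rc (θ * cval x' j) b (x' j)) := by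
    rw [Finset.prod_univ_sum, Fintype.piFinset_univ]
  rw [h2]
  exact Finset.prod_congr rfl fun j _ => by rw [Rsum]

lemma AtA_diag (m : ℕ) (θ : ℝ) (x : Fin m → Bool) :
    ((Amat m θ)ᴴ * Amat m θ) x x = 1 := by
  rw [AtA]
  apply Finset.prod_eq_one
  intro j _
  simp [Rc, sub_self]

lemma AtA_zero (m : ℕ) (θ : ℝ) (x x' : Fin m → Bool) (hne : x ≠ x')
    (hnc : x' ≠ fun j => !(x j)) :
    ((Amat m θ)ᴴ * Amat m θ) x x' = 0 := by
  rw [AtA]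
  have hex : ∃ j, x j ≠ x' j ∧ x (predF j) = x' (predF j) := by
    by_contra h
    push_neg at h
    obtain ⟨j₀, hj₀⟩ := Function.ne_iff.mp hne
    have hall := allDiff x x' h j₀ hj₀
    apply hnc
    funext j
    have := hall j
    cases hx : x j <;> cases hx' : x' j <;> simp_all
  obtain ⟨j, hj1, hj2⟩ := hex
  apply Finset.prod_eq_zero (Finset.mem_univ j)
  have hang : θ * cval x' j - θ * cval x j = 0 := by
    unfold cval; rw [← hj2]; ring
  rw [hang]
  simp [Rc, hj1]

lemma AtA_comp (m : ℕ) (θ : ℝ) (x : Fin m → Bool) :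
    ‖((Amat m θ)ᴴ * Amat m θ) x (fun j => !(x j))‖ = |Real.sin θ| ^ m := by
  rw [AtA, norm_prod]
  have h1 : ∀ j : Fin m,
      ‖Rc (θ * cval (fun j => !(x j)) j - θ * cval x j) (x j) ((fun j => !(x j)) j)‖
      = |Real.sin θ| := by
    intro j
    have hne : x j ≠ !(x j) := by cases x j <;> simp
    have hRc : ∀ α : ℝ, ‖Rc α (x j) (!(x j))‖ = |Real.sin α| := by
      intro α
      rw [Rc, if_neg hne, norm_mul, Complex.norm_I, Complex.norm_real, Real.norm_eq_abs, one_mul]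
    show ‖Rc _ (x j) (!(x j))‖ = _
    rw [hRc]
    unfold cval
    cases hx : x (predF j) <;> simp [hx]
  calc ∏ j : Fin m, ‖Rc (θ * cval (fun j => !(x j)) j - θ * cval x j) (x j) ((fun j => !(x j)) j)‖
      = ∏ _j : Fin m, |Real.sin θ| := Finset.prod_congr rfl fun j _ => h1 j
    _ = |Real.sin θ| ^ m := by rw [Finset.prod_const, Finset.card_univ, Fintype.card_fin]

lemma absA_le (m : ℕ) (θ : ℝ) (y x : Fin m → Bool) :
    ‖Amat m θ y x‖ ≤ 1 := by
  rw [Amat_eq, norm_prod]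
  apply Finset.prod_le_one
  · intro j _; exact norm_nonneg _
  · intro j _
    by_cases h : y j = x j
    · rw [Rc, if_pos h, Complex.norm_real, Real.norm_eq_abs]; exact Real.abs_cos_le_one _
    · rw [Rc, if_neg h, norm_mul, Complex.norm_I, Complex.norm_real, Real.norm_eq_abs, one_mul]
      exact Real.abs_sin_le_one _

lemma scal (σ : ℝ) (hσ : |σ| ≤ 1/2) :
    ∃ a b : ℝ, a^2 + σ^2*b^2 + 2*a*b*σ^2 = 1 ∧ a^2 + σ^2*b^2 + 2*a*b = 0 ∧
      |1 - a| ≤ |σ| ∧ |b| ≤ 2 := by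
  have hσ2 : σ^2 ≤ 1/4 := by nlinarith [abs_nonneg σ, sq_abs σ]
  set p := Real.sqrt (1 - σ^2) with hp
  have hp2 : p^2 = 1 - σ^2 := Real.sq_sqrt (by nlinarith)
  have hp0 : 0 ≤ p := Real.sqrt_nonneg _
  have hphalf : 1/2 ≤ p := by nlinarith
  have hple : p ≤ 1 := by nlinarith
  set s := Real.sqrt (2 + 2*p) with hs
  have hs2 : s^2 = 2 + 2*p := Real.sq_sqrt (by nlinarith)
  have hs0 : 0 ≤ s := Real.sqrt_nonneg _
  have hs1 : 1 ≤ s := by nlinarith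
  have hsle : s ≤ 2 := by nlinarith
  have hs2p : 2*p ≤ s := by nlinarith
  have hppos : 0 < p := by linarith
  have hspos : 0 < s := by linarith
  refine ⟨s/(2*p), -(1/(p*s)), ?_, ?_, ?_, ?_⟩
  · field_simp
    ring_nf
    linear_combination (s^2+2*p-2)*hs2 + (4-4*s^2)*hp2
  · field_simp
    ring_nf
    linear_combination (s^2+2*p-2)*hs2 + 4*hp2
  · have key : s - 2*p ≤ 2*σ^2 := by
      nlinarith [hs2, hp2, hs2p, hple, mul_self_nonneg (s-2*p)]
    have hσp : |σ| ≤ p := by linarith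
    have h1a : 1 ≤ s/(2*p) := (one_le_div (by linarith)).mpr (by linarith)
    rw [abs_sub_comm, abs_of_nonneg (by linarith)]
    rw [sub_le_iff_le_add, div_le_iff₀ (by linarith : (0:ℝ) < 2*p)]
    nlinarith [sq_abs σ, abs_nonneg σ, mul_le_mul_of_nonneg_left hσp (abs_nonneg σ)]
  · rw [abs_neg, abs_of_nonneg (by positivity)]
    rw [div_le_iff₀ (by positivity)]
    nlinarith [mul_le_mul hphalf hs1 zero_le_one hp0]

theorem stmt13 (m : ℕ) (hm : 1 ≤ m) :
    ∃ C θ₀ : ℝ, 0 < C ∧ 0 < θ₀ ∧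
      ∀ θ : ℝ, |θ| ≤ θ₀ →
        ∃ U : Matrix (Fin m → Bool) (Fin m → Bool) ℂ,
          Uᴴ * U = 1 ∧ frobNorm (Amat m θ - U) ≤ C * |θ| ^ m := by
  refine ⟨4 * 2^m, 1/2, by positivity, by norm_num, ?_⟩
  intro θ hθ
  have hsin : |Real.sin θ| ≤ |θ| := Real.abs_sin_le_abs
  set σ := Real.sin θ ^ m with hσdef
  have habsσ : |σ| = |Real.sin θ|^m := abs_pow _ _
  have hσθ : |σ| ≤ |θ|^m := by
    rw [habsσ]; exact pow_le_pow_left₀ (abs_nonneg _) hsin m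
  have hθm : |θ|^m ≤ 1/2 := by
    calc |θ|^m ≤ (1/2:ℝ)^m := pow_le_pow_left₀ (abs_nonneg _) hθ m
      _ ≤ (1/2:ℝ)^1 := pow_le_pow_of_le_one (by norm_num) (by norm_num) hm
      _ = 1/2 := pow_one _
  have hσhalf : |σ| ≤ 1/2 := le_trans hσθ hθm
  obtain ⟨a, b, hab1, hab2, h1a, hb⟩ := scal σ hσhalf
  set A := Amat m θ with hA
  set E := Aᴴ * A - 1 with hEdef
  have hAE : Aᴴ * A = 1 + E := by rw [hEdef]; abel
  set neg : (Fin m → Bool) → (Fin m → Bool) := fun x j => !(x j) with hneg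
  have hnegne : ∀ x, x ≠ neg x := by
    intro x heq
    have := congrFun heq ⟨0, hm⟩
    simp [hneg] at this
  have hnegneg : ∀ x, neg (neg x) = x := by intro x; funext j; simp [hneg]
  have hE0 : ∀ x x', x' ≠ neg x → E x x' = 0 := by
    intro x x' hx'
    rw [hEdef]
    simp only [Matrix.sub_apply]
    by_cases hxx : x' = x
    · subst hxx
      rw [AtA_diag]
      simp [Matrix.one_apply]
    · rw [AtA_zero m θ x x' (fun h => hxx h.symm) hx', Matrix.one_apply_ne (fun h => hxx h.symm)]
      ring
  have hEabs : ∀ x, ‖E x (neg x)‖ = |Real.sin θ|^m := by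
    intro x
    rw [hEdef]
    simp only [Matrix.sub_apply, Matrix.one_apply_ne (hnegne x), sub_zero]
    exact AtA_comp m θ x
  have hEH : Eᴴ = E := by
    rw [hEdef]
    simp [Matrix.conjTranspose_sub, Matrix.conjTranspose_mul,
      Matrix.conjTranspose_conjTranspose, Matrix.conjTranspose_one]
  have hE2 : E * E = ((σ:ℂ)^2) • (1 : Matrix (Fin m → Bool) (Fin m → Bool) ℂ) := by
    ext x x''
    rw [Matrix.mul_apply, Finset.sum_eq_single (neg x)]
    · by_cases hxx : x'' = x
      · rw [hxx]
        have hconj : E (neg x) x = star (E x (neg x)) := by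
          conv_lhs => rw [← hEH]
          rw [Matrix.conjTranspose_apply]
        rw [hconj, show star (E x (neg x)) = (starRingEnd ℂ) (E x (neg x)) from rfl,
          Complex.mul_conj]
        simp only [Matrix.smul_apply, Matrix.one_apply_eq, smul_eq_mul, mul_one]
        rw [Complex.normSq_eq_norm_sq, hEabs]
        have hsq : (|Real.sin θ|^m)^2 = σ^2 := by rw [hσdef, ← abs_pow, sq_abs]
        exact_mod_cast congrArg (fun t : ℝ => (t:ℂ)) hsq
      · have hz : E (neg x) x'' = 0 := hE0 _ _ (by rw [hnegneg]; exact hxx)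
        rw [hz, mul_zero]
        simp [Matrix.smul_apply, Matrix.one_apply_ne (fun h => hxx h.symm)]
    · intro x' _ hx'
      rw [hE0 x x' hx', zero_mul]
    · intro h
      exact absurd (Finset.mem_univ _) h
  have hab1C : ((a:ℂ))^2 + (σ:ℂ)^2*(b:ℂ)^2 + 2*(a:ℂ)*(b:ℂ)*(σ:ℂ)^2 = 1 := by
    exact_mod_cast congrArg (fun t : ℝ => (t:ℂ)) hab1
  have hab2C : ((a:ℂ))^2 + (σ:ℂ)^2*(b:ℂ)^2 + 2*(a:ℂ)*(b:ℂ) = 0 := by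
    exact_mod_cast congrArg (fun t : ℝ => (t:ℂ)) hab2
  set P : Matrix (Fin m → Bool) (Fin m → Bool) ℂ := (a:ℂ) • 1 + (b:ℂ) • E with hP
  refine ⟨A * P, ?_, ?_⟩
  · have hPH : Pᴴ = P := by
      rw [hP]
      simp [Matrix.conjTranspose_add, Matrix.conjTranspose_smul, Matrix.conjTranspose_one,
        hEH, Complex.star_def, Complex.conj_ofReal]
    rw [Matrix.conjTranspose_mul, hPH]
    have hassoc : P * Aᴴ * (A * P) = P * (Aᴴ * A) * P := by
      rw [Matrix.mul_assoc, Matrix.mul_assoc, Matrix.mul_assoc]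
    rw [hassoc, hAE]
    have expand : P * (1 + E) * P
        = (((a:ℂ))^2 + (σ:ℂ)^2*(b:ℂ)^2 + 2*(a:ℂ)*(b:ℂ)*(σ:ℂ)^2) • (1 : Matrix (Fin m → Bool) (Fin m → Bool) ℂ)
          + (((a:ℂ))^2 + (σ:ℂ)^2*(b:ℂ)^2 + 2*(a:ℂ)*(b:ℂ)) • E := by
      rw [hP]
      simp only [mul_add, add_mul, mul_one, one_mul, smul_mul_assoc, mul_smul_comm,
        smul_smul, hE2, smul_add]
      module
    rw [expand, hab1C, hab2C, one_smul, zero_smul, add_zero]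
  · set N : Matrix (Fin m → Bool) (Fin m → Bool) ℂ :=
      ((1:ℂ) - (a:ℂ)) • 1 + (-(b:ℂ)) • E with hN
    have hAU : A - A * P = A * N := by
      rw [hP, hN]
      simp only [Matrix.mul_add, mul_smul_comm, Matrix.mul_one]
      module
    have hent : ∀ y x, ‖(A * N) y x‖ ≤ 3 * |θ|^m := by
      intro y x
      rw [Matrix.mul_apply]
      have step1 : ‖∑ x', A y x' * N x' x‖ ≤ ∑ x', ‖A y x' * N x' x‖ :=
        norm_sum_le _ _
      have step2 : ∑ x', ‖A y x' * N x' x‖ ≤ ∑ x', ‖N x' x‖ :=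
        Finset.sum_le_sum fun x' _ => by
          rw [norm_mul]
          exact mul_le_of_le_one_left (norm_nonneg _) (absA_le m θ y x')
      have hvanish : ∀ x' ∈ Finset.univ, x' ∉ ({x, neg x} : Finset (Fin m → Bool)) →
          ‖N x' x‖ = 0 := by
        intro x' _ hx'
        simp only [Finset.mem_insert, Finset.mem_singleton, not_or] at hx'
        have hE' : E x' x = 0 := by
          apply hE0
          intro h
          exact hx'.2 (by rw [h, hnegneg])
        simp [hN, Matrix.add_apply, Matrix.smul_apply, Matrix.one_apply_ne hx'.1, hE']
      have step3 : ∑ x', ‖N x' x‖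
          = ‖N x x‖ + ‖N (neg x) x‖ := by
        rw [← Finset.sum_subset (Finset.subset_univ ({x, neg x} : Finset (Fin m → Bool))) hvanish]
        rw [Finset.sum_pair (hnegne x)]
      have hNxx : ‖N x x‖ ≤ |θ|^m := by
        have hdiag : N x x = ((1:ℂ) - a) := by
          simp [hN, Matrix.add_apply, Matrix.smul_apply, Matrix.one_apply_eq,
            hE0 x x (hnegne x)]
        rw [hdiag, show ((1:ℂ) - a) = ((1 - a : ℝ) : ℂ) by push_cast; ring,
          Complex.norm_real, Real.norm_eq_abs]
        exact le_trans h1a hσθ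
      have hNnx : ‖N (neg x) x‖ ≤ 2 * |θ|^m := by
        have hoff : N (neg x) x = (-(b:ℂ)) * E (neg x) x := by
          simp [hN, Matrix.add_apply, Matrix.smul_apply,
            Matrix.one_apply_ne (fun h => (hnegne x) h.symm)]
        have h2 : ‖E (neg x) x‖ = |Real.sin θ|^m := by
          have h3 := hEabs (neg x)
          rw [hnegneg] at h3
          exact h3
        rw [hoff, norm_mul, h2, norm_neg, Complex.norm_real, Real.norm_eq_abs]
        have h4 : |Real.sin θ|^m ≤ |θ|^m := pow_le_pow_left₀ (abs_nonneg _) hsin m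
        exact mul_le_mul hb h4 (by positivity) (by norm_num)
      have hfin := le_trans step1 step2
      rw [step3] at hfin
      linarith [hNxx, hNnx]
    rw [hAU]
    rw [frobNorm]
    have hsum : ∑ y : Fin m → Bool, ∑ x : Fin m → Bool, ‖(A*N) y x‖^2
        ≤ ∑ _y : Fin m → Bool, ∑ _x : Fin m → Bool, (3*|θ|^m)^2 := by
      refine Finset.sum_le_sum fun y _ => Finset.sum_le_sum fun x _ => ?_
      exact pow_le_pow_left₀ (norm_nonneg _) (hent y x) 2
    have hcard : (Fintype.card (Fin m → Bool) : ℝ) = 2^m := by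
      rw [Fintype.card_fun, Fintype.card_bool, Fintype.card_fin]
      push_cast
      ring
    have hconst : ∑ _y : Fin m → Bool, ∑ _x : Fin m → Bool, (3*|θ|^m)^2
        = ((2:ℝ)^m * (3 * |θ|^m))^2 := by
      rw [Finset.sum_const, Finset.sum_const, Finset.card_univ, nsmul_eq_mul, nsmul_eq_mul,
        hcard]
      ring
    have h2m : (0:ℝ) < 2^m := by positivity
    have hθ0 : (0:ℝ) ≤ |θ|^m := by positivity
    calc Real.sqrt (∑ y : Fin m → Bool, ∑ x : Fin m → Bool, ‖(A*N) y x‖^2)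
        ≤ Real.sqrt (((2:ℝ)^m * (3 * |θ|^m))^2) := by
          rw [← hconst]; exact Real.sqrt_le_sqrt hsum
      _ = (2:ℝ)^m * (3 * |θ|^m) := Real.sqrt_sq (by positivity)
      _ ≤ 4 * 2^m * |θ|^m := by nlinarith [h2m, hθ0]
end

section
/- There exists a universal constant K ≥ 1 such that for all positive integers ℓ, n, d with ℓ ≥ n, and every d-local function f : {0,1}^ℓ → {0,1}^n, there exist an integer s with s ≥ n/(K·d²), distinct input indices i₁,…,i_s ∈ {1,…,ℓ}, and pairwise disjoint sets B₁,…,B_s ⊆ {1,…,n} with |B_j| ≤ K·d for each j, such that: (a) for each j ∈ {1,…,s} and each output index k ∈ B_j, f(u)_k = f(u')_k whenever u, u' ∈ {0,1}^ℓ agree on all coordinates in {i_j} ∪ ({1,…,ℓ} \ {i₁,…,i_s}); and (b) for each output index k ∉ B₁ ∪ … ∪ B_s, f(u)_k = f(u')_k whenever u, u' agree on all coordinates in {1,…,ℓ} \ {i₁,…,i_s}. -/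
open Finset

theorem stmt16 :
    ∃ K : ℕ, 1 ≤ K ∧
      ∀ ℓ n d : ℕ, 1 ≤ ℓ → 1 ≤ n → 1 ≤ d → n ≤ ℓ →
      ∀ f : (Fin ℓ → Bool) → (Fin n → Bool), IsLocal d f →
      ∃ (s : ℕ) (idx : Fin s → Fin ℓ) (B : Fin s → Finset (Fin n)),
        (n : ℝ) / ((K : ℝ) * (d : ℝ) ^ 2) ≤ (s : ℝ) ∧
        Function.Injective idx ∧
        (∀ j j' : Fin s, j ≠ j' → Disjoint (B j) (B j')) ∧
        (∀ j : Fin s, (B j).card ≤ K * d) ∧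
        -- (a): each output bit in block `B j` depends only on `u (idx j)` and
        -- the inputs outside `{idx 1, …, idx s}`.
        (∀ j : Fin s, ∀ k ∈ B j, ∀ u u' : Fin ℓ → Bool,
          u (idx j) = u' (idx j) →
          (∀ i : Fin ℓ, i ∉ Set.range idx → u i = u' i) →
          f u k = f u' k) ∧
        -- (b): each output bit outside all blocks depends only on the inputs
        -- outside `{idx 1, …, idx s}`.
        (∀ k : Fin n, (∀ j : Fin s, k ∉ B j) → ∀ u u' : Fin ℓ → Bool,
          (∀ i : Fin ℓ, i ∉ Set.range idx → u i = u' i) →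
          f u k = f u' k) := by
  refine ⟨6, by norm_num, ?_⟩
  intro ℓ n d hℓ hn hd hnℓ f hf
  choose S hScard hSdep using hf
  set deg : Fin ℓ → ℕ := fun i => (univ.filter (fun k => i ∈ S k)).card with hdeg
  set L : Finset (Fin ℓ) := univ.filter (fun i => deg i ≤ 2 * d) with hLdef
  -- total degree
  have hsum : ∑ i : Fin ℓ, deg i = ∑ k, (S k).card := by
    simp only [hdeg, Finset.card_filter]
    rw [Finset.sum_comm]
    simp [Finset.sum_ite_mem]
  have hsum_le : ∑ i : Fin ℓ, deg i ≤ n * d := by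
    rw [hsum]
    calc ∑ k, (S k).card ≤ ∑ _k : Fin n, d := Finset.sum_le_sum (fun k _ => hScard k)
    _ = n * d := by simp [Finset.sum_const, Finset.card_univ, mul_comm]
  -- heavy inputs
  set H : Finset (Fin ℓ) := univ.filter (fun i => ¬ deg i ≤ 2 * d) with hHdef
  have hHsum : (2 * d + 1) * H.card ≤ n * d := by
    have h1 : H.card * (2 * d + 1) ≤ ∑ i ∈ H, deg i := by
      have := Finset.card_nsmul_le_sum H deg (2 * d + 1)
        (fun i hi => by
          simp only [hHdef, Finset.mem_filter] at hi
          omega)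
      simpa [smul_eq_mul, mul_comm] using this
    have h2 : ∑ i ∈ H, deg i ≤ ∑ i : Fin ℓ, deg i :=
      Finset.sum_le_sum_of_subset (Finset.subset_univ H)
    calc (2 * d + 1) * H.card = H.card * (2 * d + 1) := mul_comm _ _
      _ ≤ ∑ i ∈ H, deg i := h1
      _ ≤ ∑ i : Fin ℓ, deg i := h2
      _ ≤ n * d := hsum_le
  have hH2 : 2 * H.card ≤ n := by
    have h3 : 2 * H.card * d ≤ n * d := by nlinarith [hHsum]
    exact Nat.le_of_mul_le_mul_right (by linarith) hd
  have hLH : L.card + H.card = ℓ := by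
    have := Finset.card_filter_add_card_filter_not
      (s := (univ : Finset (Fin ℓ))) (p := fun i => deg i ≤ 2 * d)
    simpa [hLdef, hHdef, Finset.card_univ] using this
  have hLcard : n ≤ 2 * L.card := by omega
  -- maximal independent-ish set
  set C : Finset (Finset (Fin ℓ)) :=
    (L.powerset).filter (fun I => ∀ k, (S k ∩ I).card ≤ 1) with hCdef
  have hCne : C.Nonempty := ⟨∅, by simp [hCdef]⟩
  obtain ⟨I, hIC, hImax⟩ := Finset.exists_max_image C Finset.card hCne
  simp only [hCdef, Finset.mem_filter, Finset.mem_powerset] at hIC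
  obtain ⟨hIL, hP⟩ := hIC
  -- maximality consequence
  have hblock : ∀ i ∈ L \ I, ∃ k, i ∈ S k ∧ (S k ∩ I).Nonempty := by
    intro i hi
    rw [Finset.mem_sdiff] at hi
    by_contra hcon
    push_neg at hcon
    have hins : insert i I ∈ C := by
      simp only [hCdef, Finset.mem_filter, Finset.mem_powerset]
      refine ⟨Finset.insert_subset hi.1 hIL, fun k => ?_⟩
      by_cases hik : i ∈ S k
      · have hne : ¬ (S k ∩ I).Nonempty := by
          rw [Finset.not_nonempty_iff_eq_empty]; exact hcon k hik
        rw [Finset.not_nonempty_iff_eq_empty] at hne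
        have : S k ∩ insert i I ⊆ {i} := by
          intro x hx
          rw [Finset.mem_inter, Finset.mem_insert] at hx
          rcases hx.2 with h | h
          · simp [h]
          · exact absurd (Finset.mem_inter.mpr ⟨hx.1, h⟩) (by simp [hne])
        calc (S k ∩ insert i I).card ≤ ({i} : Finset (Fin ℓ)).card :=
              Finset.card_le_card this
          _ = 1 := Finset.card_singleton i
      · have : S k ∩ insert i I = S k ∩ I := by
          ext x; simp only [Finset.mem_inter, Finset.mem_insert]
          constructor
          · rintro ⟨hx, h | h⟩
            · exact absurd (h ▸ hx) hik
            · exact ⟨hx, h⟩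
          · rintro ⟨hx, h⟩; exact ⟨hx, Or.inr h⟩
        rw [this]; exact hP k
    have := hImax _ hins
    rw [Finset.card_insert_of_notMem hi.2] at this
    omega
  -- size of L \ I
  have hLI : (L \ I).card ≤ I.card * (2 * d * d) := by
    have hsub : L \ I ⊆ I.biUnion (fun i' =>
        ((univ.filter (fun k => i' ∈ S k)).biUnion S)) := by
      intro i hi
      obtain ⟨k, hik, ⟨i', hi'⟩⟩ := hblock i hi
      rw [Finset.mem_inter] at hi'
      rw [Finset.mem_biUnion]
      exact ⟨i', hi'.2, by
        rw [Finset.mem_biUnion]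
        exact ⟨k, Finset.mem_filter.mpr ⟨Finset.mem_univ k, hi'.1⟩, hik⟩⟩
    calc (L \ I).card ≤ _ := Finset.card_le_card hsub
      _ ≤ ∑ i' ∈ I, ((univ.filter (fun k => i' ∈ S k)).biUnion S).card :=
        Finset.card_biUnion_le
      _ ≤ ∑ _i' ∈ I, (2 * d * d) := by
        refine Finset.sum_le_sum (fun i' hi' => ?_)
        calc ((univ.filter (fun k => i' ∈ S k)).biUnion S).card
            ≤ ∑ k ∈ univ.filter (fun k => i' ∈ S k), (S k).card :=
              Finset.card_biUnion_le
          _ ≤ ∑ _k ∈ univ.filter (fun k => i' ∈ S k), d :=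
              Finset.sum_le_sum (fun k _ => hScard k)
          _ = deg i' * d := by simp [hdeg, Finset.sum_const, smul_eq_mul]
          _ ≤ 2 * d * d := by
            have : deg i' ≤ 2 * d := by
              have := hIL hi'
              simp only [hLdef, Finset.mem_filter] at this
              exact this.2
            exact Nat.mul_le_mul_right d this
      _ = I.card * (2 * d * d) := by simp [Finset.sum_const, smul_eq_mul]
  have hkey : n ≤ 6 * d ^ 2 * I.card := by
    have h1 : L.card ≤ I.card + (L \ I).card := by
      have := Finset.card_sdiff_add_card_eq_card hIL
      omega
    nlinarith [hLcard, hLI, h1, hd]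
  -- construct the answer
  set s := I.card with hs
  set e := I.equivFin with he
  set idx : Fin s → Fin ℓ := fun j => (e.symm j : Fin ℓ) with hidx
  have hinj : Function.Injective idx := by
    intro j j' h
    have : e.symm j = e.symm j' := Subtype.ext h
    exact e.symm.injective this
  have hrange : ∀ i : Fin ℓ, i ∈ Set.range idx ↔ i ∈ I := by
    intro i
    constructor
    · rintro ⟨j, rfl⟩; exact (e.symm j).2
    · intro hi
      exact ⟨e ⟨i, hi⟩, by simp [hidx]⟩
  have hidxI : ∀ j, idx j ∈ I := fun j => (e.symm j).2
  set B : Fin s → Finset (Fin n) := fun j => univ.filter (fun k => idx j ∈ S k)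
    with hB
  refine ⟨s, idx, B, ?_, hinj, ?_, ?_, ?_, ?_⟩
  · rw [div_le_iff₀ (by positivity)]
    have : (n : ℝ) ≤ 6 * (d : ℝ) ^ 2 * (s : ℝ) := by exact_mod_cast hkey
    push_cast
    linarith
  · intro j j' hjj
    rw [Finset.disjoint_left]
    intro k hk hk'
    simp only [hB, Finset.mem_filter] at hk hk'
    have h1 : idx j ∈ S k ∩ I := Finset.mem_inter.mpr ⟨hk.2, hidxI j⟩
    have h2 : idx j' ∈ S k ∩ I := Finset.mem_inter.mpr ⟨hk'.2, hidxI j'⟩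
    have := Finset.card_le_one.mp (hP k) _ h1 _ h2
    exact hjj (hinj this)
  · intro j
    have : (B j).card = deg (idx j) := rfl
    rw [this]
    have hL' : idx j ∈ L := hIL (hidxI j)
    simp only [hLdef, Finset.mem_filter] at hL'
    calc deg (idx j) ≤ 2 * d := hL'.2
      _ ≤ 6 * d := by omega
  · intro j k hk u u' h1 h2
    simp only [hB, Finset.mem_filter] at hk
    refine hSdep k u u' (fun i hi => ?_)
    by_cases hiI : i ∈ I
    · have hii : i ∈ S k ∩ I := Finset.mem_inter.mpr ⟨hi, hiI⟩
      have hjj : idx j ∈ S k ∩ I := Finset.mem_inter.mpr ⟨hk.2, hidxI j⟩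
      have : i = idx j := Finset.card_le_one.mp (hP k) _ hii _ hjj
      rw [this]; exact h1
    · exact h2 i (fun hr => hiI ((hrange i).mp hr))
  · intro k hk u u' h2
    refine hSdep k u u' (fun i hi => ?_)
    refine h2 i (fun hr => ?_)
    obtain ⟨j, rfl⟩ := hr
    exact hk j (by simp [hB, hi])
end
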